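/- arXiv:1409.0779 — 4 statements merged into one kernel-verified Lean document; each statement's English description precedes it below -/
import Mathlib

section
/- Let q ≥ 2 be an integer and let M be a simple matroid with more than (q^{r(M)} - 1)/(q - 1) points. Then for every element e of M, either the contraction M/e has more than (q^{r(M)-1} - 1)/(q - 1) points (i.e., rank-1 flats), or M has a restriction isomorphic to the uniform matroid U_{2,q+2} whose ground set contains e. -/
open Set Matroid

namespace PaperDefs

variable {α β : Type*}

/-- The rank of a matroid: the common cardinality of its bases (junk value if infinite). -/
noncomputable def rk (M : Matroid α) : ℕ := sSup (Set.ncard '' {B | M.IsBase B})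

/-- The rank of a set in a matroid. -/
noncomputable def rkOf (M : Matroid α) (X : Set α) : ℕ := rk (M ↾ X)

/-- A point is a rank-one flat. -/
def Point (M : Matroid α) (P : Set α) : Prop := M.IsFlat P ∧ rkOf M P = 1

/-- A line is a rank-two flat. -/
def Line (M : Matroid α) (L : Set α) : Prop := M.IsFlat L ∧ rkOf M L = 2

/-- ε(M) : the number of points of `M`. -/
noncomputable def eps (M : Matroid α) : ℕ := {P | Point M P}.ncard

/-- Deletion of a set from a matroid. -/
def delete (M : Matroid α) (D : Set α) : Matroid α := M ↾ (M.E \ D)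

/-- Contraction of a set in a matroid, via duality. -/
def contract (M : Matroid α) (C : Set α) : Matroid α := (delete M✶ C)✶

/-- `N` is a minor of `M`. -/
def IsMinor (N M : Matroid α) : Prop :=
  ∃ C D : Set α, C ⊆ M.E ∧ D ⊆ M.E ∧ Disjoint C D ∧ N = delete (contract M C) D

/-- A matroid is simple if all of its subsets of size at most two are independent. -/
def Simple (M : Matroid α) : Prop :=
  ∀ I ⊆ M.E, I.Finite → I.ncard ≤ 2 → M.Indep I

/-- `M` is (a copy of) the uniform matroid `U_{k,n}`. -/
def IsUnif (M : Matroid α) (k n : ℕ) : Prop :=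
  M.E.Finite ∧ M.E.ncard = n ∧ ∀ I ⊆ M.E, (M.Indep I ↔ I.Finite ∧ I.ncard ≤ k)

/-- A circuit : a minimal dependent set. -/
def Circuit (M : Matroid α) (C : Set α) : Prop :=
  C ⊆ M.E ∧ ¬ M.Indep C ∧ ∀ D ⊂ C, M.Indep D

/-- A cocircuit : a circuit of the dual. -/
def Cocircuit (M : Matroid α) (C : Set α) : Prop := Circuit M✶ C

/-- A loop. -/
def Loop (M : Matroid α) (e : α) : Prop := e ∈ M.E ∧ ¬ M.Indep {e}

/-- Representability of a matroid over a field. -/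
def Rep (M : Matroid α) (F : Type*) [Field F] : Prop :=
  ∃ (n : ℕ) (φ : α → (Fin n → F)),
    ∀ I ⊆ M.E, (M.Indep I ↔ LinearIndependent F (fun x : I => φ x.1))

/-- `M` is (a copy of) the projective geometry `PG(n-1,q)` over the finite field `F` of order
`q`: a simple rank-`n` `F`-representable matroid with `(q^n-1)/(q-1)` elements. -/
def IsPG (M : Matroid α) (F : Type*) [Field F] [Fintype F] (n : ℕ) : Prop :=
  Simple M ∧ Rep M F ∧ rk M = n ∧ M.E.Finite ∧
    M.E.ncard = (Fintype.card F ^ n - 1) / (Fintype.card F - 1)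

/-- A flat `Fl` of `M` is modular. -/
def ModularFlat (M : Matroid α) (Fl : Set α) : Prop :=
  M.IsFlat Fl ∧ ∀ G, M.IsFlat G → rkOf M Fl + rkOf M G = rkOf M (Fl ∪ G) + rkOf M (Fl ∩ G)

/-- `M'` is the principal extension of `M` by the new element `e` placed freely on the flat
`Fl` of `M`. -/
def IsPrincipalExt (M' M : Matroid α) (e : α) (Fl : Set α) : Prop :=
  M.IsFlat Fl ∧ e ∉ M.E ∧ M'.E = insert e M.E ∧ delete M' {e} = M ∧
    ∀ X ⊆ M.E, (e ∈ M'.closure X ↔ Fl ⊆ M.closure X)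

/-- `N` is (a copy of) `P(n-1,q,k)` : the principal extension of a rank-`k` flat of
`PG(n-1,q)`, where `q = |F|`. -/
def IsPGPrincExt (N : Matroid α) (F : Type*) [Field F] [Fintype F] (n k : ℕ) : Prop :=
  ∃ (e : α) (Fl : Set α), IsPG (delete N {e}) F n ∧ rkOf (delete N {e}) Fl = k ∧
    IsPrincipalExt N (delete N {e}) e Fl

/-- `T` is the truncation of the matroid `N`. -/
def IsTruncation (T N : Matroid α) : Prop :=
  T.E = N.E ∧ ∀ I, (T.Indep I ↔ N.Indep I ∧ I.Finite ∧ I.ncard ≤ rk N - 1)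

/-- `M` is (a copy of) the rank-`k` free spike `Λ_k` : ground set consists of `k` two-element
legs, and a set is independent iff it has at most `k` elements and contains at most one leg. -/
def IsFreeSpike (M : Matroid α) (k : ℕ) : Prop :=
  ∃ f : Fin k × Fin 2 ↪ α, M.E = Set.range f ∧
    ∀ I ⊆ M.E, (M.Indep I ↔ I.Finite ∧ I.ncard ≤ k ∧
      ¬ ∃ i j : Fin k, i ≠ j ∧ {f (i,0), f (i,1), f (j,0), f (j,1)} ⊆ I)

end PaperDefs

open PaperDefs

section Aux

open Finset in
lemma geom_mul_aux {q : ℕ} (hq : 2 ≤ q) : ∀ n : ℕ,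
    (∑ i ∈ Finset.range n, q ^ i) * (q - 1) = q ^ n - 1 := by
  intro n
  induction n with
  | zero => simp
  | succ n ih =>
    rw [Finset.sum_range_succ, add_mul, ih, Nat.mul_sub, mul_one, ← pow_succ]
    have h1 : 1 ≤ q ^ n := Nat.one_le_pow _ _ (by omega)
    have h4 : q ^ n ≤ q ^ (n + 1) := Nat.pow_le_pow_right (by omega) (by omega)
    omega

lemma geom_div {q : ℕ} (hq : 2 ≤ q) (n : ℕ) :
    (q ^ n - 1) / (q - 1) = ∑ i ∈ Finset.range n, q ^ i :=
  Nat.div_eq_of_eq_mul_left (by omega) (geom_mul_aux hq n).symm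

variable {α : Type*} {M : Matroid α} {B I P X : Set α} {x e : α}

lemma rk_eq_ncard_of_base (hB : M.IsBase B) (hBfin : B.Finite) : rk M = B.ncard := by
  have h : Set.ncard '' {B' | M.IsBase B'} = {B.ncard} := by
    ext n
    simp only [Set.mem_image, Set.mem_setOf_eq, Set.mem_singleton_iff]
    exact ⟨fun ⟨B', hB', h⟩ => h ▸ hB'.ncard_eq_ncard_of_isBase hB, fun h => ⟨B, hB, h.symm⟩⟩
  rw [rk, h, csSup_singleton]

lemma rkOf_eq_ncard_of_basis' (hI : M.IsBasis' I P) (hIfin : I.Finite) : rkOf M P = I.ncard :=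
  rk_eq_ncard_of_base (isBase_restrict_iff'.mpr hI) hIfin

lemma flat_closure (M : Matroid α) (X : Set α) : M.IsFlat (M.closure X) := by
  refine ⟨fun J Y hJ hJY => ?_, M.closure_subset_ground X⟩
  calc Y ⊆ M.closure J := hJY.subset_closure
    _ = M.closure (M.closure X) := hJ.closure_eq_closure
    _ = M.closure X := M.closure_closure X

lemma simple_pair_indep (hsimple : Simple M) (hx : x ∈ M.E) (he : e ∈ M.E) :
    M.Indep {x, e} := by
  refine hsimple _ (by simp [hx, he, Set.insert_subset_iff]) (Set.toFinite _) ?_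
  exact (Set.ncard_insert_le _ _).trans (by simp)

lemma simple_single_indep (hsimple : Simple M) (hx : x ∈ M.E) : M.Indep {x} := by
  refine hsimple _ (by simpa) (Set.toFinite _) (by simp)

lemma simple_closure_singleton (hsimple : Simple M) (hx : x ∈ M.E) :
    M.closure {x} = {x} := by
  have hxI : M.Indep {x} := simple_single_indep hsimple hx
  refine subset_antisymm (fun y hy => ?_) (M.subset_closure _ (by simpa))
  by_contra hyx
  have hyx' : y ∉ ({x} : Set α) := hyx
  have hdep : M.Dep (insert y {x}) := (hxI.mem_closure_iff_of_notMem hyx').mp hy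
  exact hdep.1 (simple_pair_indep hsimple (M.mem_ground_of_mem_closure hy) hx)

/-- A rank-one flat is the closure of a single nonloop. -/
lemma point_exists_closure {N : Matroid α} (hfinE : N.E.Finite) (hP : Point N P) :
    ∃ x ∈ P, P = N.closure {x} ∧ N.Indep {x} := by
  obtain ⟨hflat, hrk⟩ := hP
  obtain ⟨J, hJ⟩ := (N ↾ P).exists_isBase
  have hJ' : N.IsBasis' J P := isBase_restrict_iff'.mp hJ
  have hJfin : J.Finite := hfinE.subset (hJ'.indep.subset_ground)
  rw [rkOf_eq_ncard_of_basis' hJ' hJfin] at hrk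
  obtain ⟨x, rfl⟩ := Set.ncard_eq_one.mp hrk
  refine ⟨x, hJ'.subset rfl, ?_, hJ'.indep⟩
  calc P = N.closure P := (hflat.closure).symm
    _ = N.closure {x} := hJ'.closure_eq_closure.symm

lemma point_closure_singleton {N : Matroid α} (hx : N.Indep {x}) :
    Point N (N.closure {x}) := by
  refine ⟨flat_closure N _, ?_⟩
  rw [rkOf_eq_ncard_of_basis' hx.isBasis_closure.isBasis' (Set.finite_singleton x)]
  simp

/-- In a simple matroid, points are exactly singletons of ground elements. -/
lemma point_iff_singleton (hsimple : Simple M) (hfin : M.E.Finite) :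
    Point M P ↔ ∃ x ∈ M.E, P = {x} := by
  constructor
  · intro hP
    obtain ⟨x, hxP, rfl, hxI⟩ := point_exists_closure hfin hP
    have hxE : x ∈ M.E := hxI.subset_ground rfl
    exact ⟨x, hxE, simple_closure_singleton hsimple hxE⟩
  · rintro ⟨x, hx, rfl⟩
    have hxI : M.Indep {x} := simple_single_indep hsimple hx
    have := point_closure_singleton hxI
    rwa [simple_closure_singleton hsimple hx] at this

lemma eps_eq_ncard (hsimple : Simple M) (hfin : M.E.Finite) : eps M = M.E.ncard := by
  have h : {P | Point M P} = (fun x => ({x} : Set α)) '' M.E := by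
    ext P
    simp only [Set.mem_setOf_eq, point_iff_singleton hsimple hfin, Set.mem_image]
    exact ⟨fun ⟨x, hx, h⟩ => ⟨x, hx, h.symm⟩, fun ⟨x, hx, h⟩ => ⟨x, hx, h.symm⟩⟩
  rw [eps, h, Set.ncard_image_of_injective _ Set.singleton_injective]

lemma contract_ground_eq (M : Matroid α) (e : α) : (PaperDefs.contract M {e}).E = M.E \ {e} := rfl

lemma contract_indep_iff' (he : M.Indep {e}) {I : Set α} :
    (PaperDefs.contract M {e}).Indep I ↔ M.Indep (insert e I) ∧ I ⊆ M.E \ {e} := by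
  have heE : e ∈ M.E := he.subset_ground rfl
  have hXE : M.E \ {e} ⊆ M✶.E := Set.diff_subset
  show (M✶ ↾ (M✶.E \ {e}))✶.Indep I ↔ _
  rw [dual_indep_iff_exists']
  constructor
  · rintro ⟨hIX, B, hB, hdis⟩
    have hIX' : I ⊆ M.E \ {e} := hIX
    have hB' : M✶.IsBasis' B (M✶.E \ {e}) := isBase_restrict_iff'.mp hB
    have hBbase : M✶.IsBase B := by
      rw [isBase_iff_indep_closure_eq]
      refine ⟨hB'.indep, ?_⟩
      rw [hB'.closure_eq_closure]
      have hco : M✶.Coindep {e} := dual_coindep_iff.mpr he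
      rw [coindep_iff_compl_spanning] at hco
      exact (spanning_iff_closure_eq hXE).mp hco
    have hcompl : M.IsBase (M.E \ B) := hBbase.compl_isBase_of_dual
    refine ⟨hcompl.indep.subset ?_, hIX'⟩
    refine Set.insert_subset ⟨heE, fun heB => (hB'.subset heB).2 rfl⟩ fun y hy =>
      ⟨(hIX' hy).1, fun hyB => (Set.disjoint_left.mp hdis hy) hyB⟩
  · rintro ⟨hind, hIX⟩
    obtain ⟨B₀, hB₀, hsub⟩ := hind.exists_isBase_superset
    have heB₀ : e ∈ B₀ := hsub (Set.mem_insert _ _)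
    have hBdual : M✶.IsBase (M.E \ B₀) := hB₀.compl_isBase_dual
    have hBX : M.E \ B₀ ⊆ M✶.E \ {e} := fun y hy => ⟨hy.1, fun h => hy.2 (h ▸ heB₀)⟩
    have hbasis : M✶.IsBasis (M.E \ B₀) (M✶.E \ {e}) := by
      rw [isBasis_iff_indep_closure]
      exact ⟨hBdual.indep, by rw [hBdual.closure_eq]; exact hXE, hBX⟩
    exact ⟨hIX, M.E \ B₀, hbasis.restrict_isBase,
      Set.disjoint_left.mpr fun y hyI hyB => hyB.2 (hsub (Set.mem_insert_of_mem _ hyI))⟩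

end Aux

theorem stmt0 {α : Type*} (q : ℕ) (hq : 2 ≤ q) (M : Matroid α) (hfin : M.E.Finite)
    (hsimple : Simple M)
    (hdense : (q ^ rk M - 1) / (q - 1) < eps M) :
    ∀ e ∈ M.E,
      (q ^ (rk M - 1) - 1) / (q - 1) < eps (PaperDefs.contract M {e}) ∨
        ∃ L ⊆ M.E, e ∈ L ∧ IsUnif (M ↾ L) 2 (q + 2) := by
  intro e he
  by_cases hU : ∃ L ⊆ M.E, e ∈ L ∧ IsUnif (M ↾ L) 2 (q + 2)
  · exact Or.inr hU
  left
  classical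
  have heI : M.Indep {e} := simple_single_indep hsimple he
  set N := PaperDefs.contract M {e} with hN
  have hNE : N.E = M.E \ {e} := rfl
  have hNind : ∀ I : Set α, N.Indep I ↔ M.Indep (insert e I) ∧ I ⊆ M.E \ {e} :=
    fun I => contract_indep_iff' heI
  -- every "line through e" has at most q points besides e
  have hline : ∀ x ∈ M.E \ {e}, (M.closure {x, e} \ {e}).ncard ≤ q := by
    intro x hx
    by_contra hgt
    push_neg at hgt
    have hpair : ({x, e} : Set α) ⊆ M.E := by
      rw [Set.insert_subset_iff]; exact ⟨hx.1, by simpa using he⟩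
    have hclE : M.closure {x, e} ⊆ M.E := M.closure_subset_ground _
    have hclfin : (M.closure {x, e} \ {e}).Finite := (hfin.subset hclE).diff
    obtain ⟨L', hL'sub, hL'card⟩ := Set.exists_subset_card_eq
      (show q + 1 ≤ (M.closure {x, e} \ {e}).ncard by omega)
    have hL'fin : L'.Finite := hclfin.subset hL'sub
    have heL' : e ∉ L' := fun h => (hL'sub h).2 rfl
    have hLsub : insert e L' ⊆ M.closure {x, e} :=
      Set.insert_subset ((M.subset_closure _ hpair) (by simp)) (hL'sub.trans Set.diff_subset)
    have hLE : insert e L' ⊆ M.E := hLsub.trans hclE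
    have hLfin : (insert e L').Finite := hL'fin.insert e
    have hLcard : (insert e L').ncard = q + 2 := by
      rw [Set.ncard_insert_of_notMem heL' hL'fin, hL'card]
    refine hU ⟨insert e L', hLE, Set.mem_insert _ _, hLfin, hLcard, ?_⟩
    intro I hIL
    rw [restrict_indep_iff]
    constructor
    · rintro ⟨hind, hIL'⟩
      have hIfin : I.Finite := hLfin.subset hIL
      refine ⟨hIfin, ?_⟩
      have hpairind : M.Indep {x, e} := simple_pair_indep hsimple hx.1 he
      obtain ⟨J, hJ, hIJ⟩ := hind.subset_isBasis_of_subset (hIL.trans hLsub)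
        (M.closure_subset_ground _)
      have h2 : J.encard = ({x, e} : Set α).encard :=
        hJ.encard_eq_encard hpairind.isBasis_closure
      have hxe : x ≠ e := fun h => hx.2 h
      rw [Set.encard_pair hxe] at h2
      have hIe : I.encard ≤ 2 := (Set.encard_mono hIJ).trans h2.le
      exact (Set.encard_le_coe_iff_finite_ncard_le.mp hIe).2
    · rintro ⟨hIfin, hIcard⟩
      exact ⟨hsimple I (hIL.trans hLE) hIfin hIcard, hIL⟩
  -- the points of the contraction
  have hXfin : (M.E \ {e}).Finite := hfin.subset Set.diff_subset
  have hPsub : {P | Point N P} ⊆ {S | S ⊆ M.E \ {e}} := fun P hP => hNE ▸ hP.1.subset_ground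
  have hPfin : {P | Point N P}.Finite := hXfin.finite_subsets.subset hPsub
  set f : α → Set α := fun x => N.closure {x} with hf
  have hxind : ∀ x ∈ M.E \ {e}, N.Indep {x} := by
    intro x hx
    rw [hNind]
    refine ⟨?_, by simpa using hx⟩
    have hseteq : insert e {x} = ({x, e} : Set α) := by
      ext z; simp only [Set.mem_insert_iff, Set.mem_singleton_iff]; tauto
    rw [hseteq]
    exact simple_pair_indep hsimple hx.1 he
  have hmaps : ∀ x ∈ M.E \ {e}, Point N (f x) := fun x hx => point_closure_singleton (hxind x hx)
  have hfiber : ∀ x ∈ M.E \ {e}, ∀ y ∈ M.E \ {e}, f y = f x → y ∈ M.closure {x, e} \ {e} := by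
    intro x hx y hy hfy
    have hpair : ({x, e} : Set α) ⊆ M.E := by
      rw [Set.insert_subset_iff]; exact ⟨hx.1, by simpa using he⟩
    refine ⟨?_, fun h => hy.2 h⟩
    have hyN : y ∈ N.closure {x} := by
      have hyy : y ∈ N.closure {y} := N.mem_closure_self y (show y ∈ N.E from hNE ▸ hy)
      rwa [show N.closure {y} = N.closure {x} from hfy] at hyy
    by_cases hxy : y = x
    · subst hxy
      exact (M.subset_closure _ hpair) (by simp)
    have hxIN : N.Indep {x} := hxind x hx
    have hdepN : N.Dep (insert y {x}) :=
      (hxIN.mem_closure_iff_of_notMem (by simpa using hxy)).mp hyN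
    have hnotind : ¬ M.Indep (insert e (insert y {x})) := by
      intro hcon
      refine hdepN.1 ((hNind _).mpr ⟨hcon, ?_⟩)
      rintro z (rfl | hz)
      · exact hy
      · rw [Set.mem_singleton_iff] at hz; subst hz; exact hx
    have hpairind : M.Indep {x, e} := simple_pair_indep hsimple hx.1 he
    have hynotin : y ∉ ({x, e} : Set α) := by
      rintro (rfl | rfl)
      · exact hxy rfl
      · exact hy.2 rfl
    refine (hpairind.mem_closure_iff_of_notMem hynotin).mpr ⟨?_, Set.insert_subset hy.1 hpair⟩
    intro hcon
    apply hnotind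
    have hseteq : insert y ({x, e} : Set α) = insert e (insert y {x}) := by
      ext z; simp only [Set.mem_insert_iff, Set.mem_singleton_iff]; tauto
    rwa [hseteq] at hcon
  -- Finset counting
  set s : Finset α := hXfin.toFinset with hs_def
  set t : Finset (Set α) := hPfin.toFinset with ht_def
  have hcard : s.card ≤ q * t.card := by
    refine Finset.card_le_mul_card_image_of_maps_to (f := f) (fun a ha => ?_) q (fun P hP => ?_)
    · rw [hs_def, Set.Finite.mem_toFinset] at ha
      rw [ht_def, Set.Finite.mem_toFinset]
      exact hmaps a ha
    · rcases (s.filter fun a => f a = P).eq_empty_or_nonempty with hemp | ⟨x₀, hx₀⟩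
      · simp [hemp]
      · rw [Finset.mem_filter, hs_def, Set.Finite.mem_toFinset] at hx₀
        obtain ⟨hx₀X, hfx₀⟩ := hx₀
        have hsubfib : ↑(s.filter fun a => f a = P) ⊆ M.closure {x₀, e} \ {e} := by
          intro y hy
          rw [Finset.mem_coe, Finset.mem_filter, hs_def, Set.Finite.mem_toFinset] at hy
          exact hfiber x₀ hx₀X y hy.1 (by rw [hy.2, ← hfx₀])
        calc (s.filter fun a => f a = P).card
            = (↑(s.filter fun a => f a = P) : Set α).ncard := (Set.ncard_coe_finset _).symm
          _ ≤ (M.closure {x₀, e} \ {e}).ncard := Set.ncard_le_ncard hsubfib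
              ((hfin.subset (M.closure_subset_ground _)).diff)
          _ ≤ q := hline x₀ hx₀X
  have hscard : s.card = M.E.ncard - 1 := by
    rw [hs_def, ← Set.ncard_eq_toFinset_card _ hXfin, Set.ncard_diff_singleton_of_mem he]
  have htcard : t.card = eps N := by
    rw [ht_def, eps, Set.ncard_eq_toFinset_card _ hPfin]
  have hepsM : eps M = M.E.ncard := eps_eq_ncard hsimple hfin
  -- rank is at least one
  obtain ⟨B, hB⟩ := M.exists_isBase
  have hBfin : B.Finite := hfin.subset hB.subset_ground
  have hBne : B.Nonempty := by
    rcases B.eq_empty_or_nonempty with rfl | h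
    · exfalso
      have h1 := heI.notMem_closure_diff_of_mem (Set.mem_singleton e)
      rw [Set.diff_self] at h1
      exact h1 (hB.closure_eq ▸ he)
    · exact h
  have hrk1 : 1 ≤ rk M := by
    rw [rk_eq_ncard_of_base hB hBfin]
    exact (Set.ncard_pos hBfin).mpr hBne
  -- arithmetic conclusion
  rw [geom_div hq] at hdense ⊢
  obtain ⟨r, hr⟩ : ∃ r, rk M = r + 1 := ⟨rk M - 1, by omega⟩
  have hsplit : ∑ i ∈ Finset.range (rk M), q ^ i = q * ∑ i ∈ Finset.range r, q ^ i + 1 := by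
    rw [hr, Finset.sum_range_succ']
    simp only [pow_succ, pow_zero]
    rw [← Finset.sum_mul, Finset.sum_mul, Finset.mul_sum]
    congr 1
    refine Finset.sum_congr rfl fun i _ => mul_comm _ _
  rw [hr]
  simp only [Nat.add_sub_cancel]
  have h1 : q * ∑ i ∈ Finset.range r, q ^ i + 1 < M.E.ncard := by
    rw [← hsplit, ← hepsM]; exact hdense
  have h2 : M.E.ncard - 1 ≤ q * eps N := by
    rw [← hscard, ← htcard]; exact hcard
  have h3 : q * ∑ i ∈ Finset.range r, q ^ i < q * eps N := by omega
  exact Nat.lt_of_mul_lt_mul_left h3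
end

section
/- Kung's theorem: If ℓ ≥ 2 is an integer and M is a matroid with no minor isomorphic to the uniform matroid U_{2,ℓ+2}, then the number of points (rank-1 flats) of M is at most (ℓ^{r(M)} - 1)/(ℓ - 1). -/
open Set Matroid

open PaperDefs

namespace PaperDefs

section KungAux

open PaperDefs

variable {α : Type*} {M : Matroid α} {X P Q I J B S : Set α} {e x y a b : α}

lemma flat_closure' (M : Matroid α) (X : Set α) : M.IsFlat (M.closure X) := by
  rw [Matroid.closure_def]
  have hne : ({F | M.IsFlat F ∧ X ∩ M.E ⊆ F} : Set (Set α)).Nonempty :=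
    ⟨M.E, M.ground_isFlat, inter_subset_right⟩
  rw [sInter_eq_iInter]
  have := hne.coe_sort
  exact Matroid.IsFlat.iInter fun F => F.2.1

lemma rk_eq_ncard_base (hB : M.IsBase B) : rk M = B.ncard := by
  have h : Set.ncard '' {B' | M.IsBase B'} = {B.ncard} := by
    apply subset_antisymm
    · rintro n ⟨B', hB', rfl⟩
      exact hB'.ncard_eq_ncard_of_isBase hB
    · rintro n hn
      rw [mem_singleton_iff] at hn
      exact ⟨B, hB, hn.symm⟩
  rw [rk, h, csSup_singleton]

lemma rkOf_eq_ncard (hB : (M ↾ X).IsBase B) : rkOf M X = B.ncard :=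
  rk_eq_ncard_base hB

lemma ncard_le_of_indep_subset_closure (hJ : M.Indep J) (hJfin : J.Finite)
    (hI : M.Indep I) (hIJ : I ⊆ M.closure J) : I.ncard ≤ J.ncard := by
  obtain ⟨I', hI', hII'⟩ := hI.subset_isBasis_of_subset hIJ (M.closure_subset_ground J)
  have h1 : (M ↾ M.closure J).IsBase I' := hI'.restrict_isBase
  have h2 : (M ↾ M.closure J).IsBase J := (hJ.isBasis_closure).restrict_isBase
  have hfin : I'.Finite := h2.finite_of_finite hJfin h1
  calc I.ncard ≤ I'.ncard := Set.ncard_le_ncard hII' hfin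
    _ = J.ncard := h1.ncard_eq_ncard_of_isBase h2

lemma point_exists_rep (hfin : M.E.Finite) (hP : Point M P) :
    ∃ x, x ∈ P ∧ M.Indep {x} ∧ P = M.closure {x} := by
  obtain ⟨hPflat, hP1⟩ := hP
  have hPE : P ⊆ M.E := hPflat.subset_ground
  obtain ⟨B, hB⟩ := (M ↾ P).exists_isBase
  have hcard : B.ncard = 1 := by rw [← rkOf_eq_ncard hB, hP1]
  obtain ⟨x, rfl⟩ := Set.ncard_eq_one.mp hcard
  have hbasis : M.IsBasis {x} P := (Matroid.isBase_restrict_iff hPE).mp hB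
  refine ⟨x, hbasis.subset rfl, hbasis.indep, subset_antisymm ?_ ?_⟩
  · exact hbasis.subset_closure
  · calc M.closure {x} ⊆ M.closure P := M.closure_subset_closure hbasis.subset
      _ = P := hPflat.closure

lemma point_closure_singleton (hx : M.Indep {x}) : Point M (M.closure {x}) := by
  refine ⟨flat_closure' M _, ?_⟩
  have hb : (M ↾ M.closure {x}).IsBase {x} := hx.isBasis_closure.restrict_isBase
  rw [rkOf_eq_ncard hb, Set.ncard_singleton]

lemma closure_singleton_eq (ha : M.Indep {a}) (hb : M.Indep {b}) (hba : b ∈ M.closure {a}) :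
    M.closure {a} = M.closure {b} := by
  have hb0 : b ∈ M.E \ M.closure ∅ := by
    rw [← M.empty_indep.insert_indep_iff_of_notMem (notMem_empty b)]
    simpa using hb
  have hex : a ∈ M.closure {b} := by
    have h : b ∈ M.closure (insert a ∅) \ M.closure ∅ := by
      simpa using ⟨hba, hb0.2⟩
    have := Matroid.closure_exchange h
    simpa using this.1
  apply subset_antisymm
  · exact M.closure_subset_closure_of_subset_closure (by simpa using hex)
  · exact M.closure_subset_closure_of_subset_closure (by simpa using hba)

lemma points_finite (hfin : M.E.Finite) : {P | Point M P}.Finite :=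
  (hfin.finite_subsets).subset fun _ hP => hP.1.subset_ground

lemma delete_delete' (M : Matroid α) (D₁ D₂ : Set α) :
    delete (delete M D₁) D₂ = delete M (D₁ ∪ D₂) := by
  show (M ↾ (M.E \ D₁)) ↾ ((M ↾ (M.E \ D₁)).E \ D₂) = M ↾ (M.E \ (D₁ ∪ D₂))
  rw [Matroid.restrict_ground_eq, M.restrict_restrict_eq diff_subset, diff_diff]

lemma contract_ground' (M : Matroid α) (C : Set α) : (contract M C).E = M.E \ C := rfl

lemma contract_contract' (M : Matroid α) (C₁ C₂ : Set α) :
    contract (contract M C₁) C₂ = contract M (C₁ ∪ C₂) := by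
  unfold PaperDefs.contract
  rw [Matroid.dual_dual, delete_delete']

lemma contract_empty' (M : Matroid α) : contract M ∅ = M := by
  unfold PaperDefs.contract PaperDefs.delete
  rw [diff_empty]
  show ((M✶) ↾ (M✶.E))✶ = M
  rw [Matroid.restrict_ground_eq_self, Matroid.dual_dual]

lemma restrict_isMinor (hS : S ⊆ M.E) : IsMinor (M ↾ S) M := by
  refine ⟨∅, M.E \ S, empty_subset _, diff_subset, by simp, ?_⟩
  rw [contract_empty']
  show M ↾ S = M ↾ (M.E \ (M.E \ S))
  rw [diff_diff_cancel_left hS]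

lemma isMinor_of_isMinor_contract (heE : e ∈ M.E) {U : Matroid α}
    (h : IsMinor U (contract M {e})) : IsMinor U M := by
  obtain ⟨C, D, hC, hD, hdisj, rfl⟩ := h
  rw [contract_ground'] at hC hD
  refine ⟨insert e C, D, insert_subset heE (hC.trans diff_subset),
    hD.trans diff_subset, ?_, ?_⟩
  · rw [Set.insert_eq]
    refine Set.disjoint_union_left.mpr ⟨?_, hdisj⟩
    refine Set.disjoint_left.mpr ?_
    rintro z hz hzD
    rw [mem_singleton_iff] at hz
    exact (hD hzD).2 hz
  · rw [Set.insert_eq, ← contract_contract']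

lemma contract_indep_iff' (he : M.Indep {e}) {I : Set α} :
    (contract M {e}).Indep I ↔ I ⊆ M.E \ {e} ∧ M.Indep (insert e I) := by
  have heE : e ∈ M.E := he.subset_ground rfl
  have hXE : M.E \ {e} ⊆ M✶.E := by rw [Matroid.dual_ground]; exact diff_subset
  have hEq : (contract M {e}).Indep I ↔
      I ⊆ M.E \ {e} ∧ ∃ B, M✶.IsBasis B (M.E \ {e}) ∧ Disjoint I B := by
    show (M✶ ↾ (M✶.E \ {e}))✶.Indep I ↔ _
    rw [Matroid.dual_indep_iff_exists']
    constructor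
    · rintro ⟨hIs, B, hB, hdisj⟩
      exact ⟨hIs, B, (Matroid.isBase_restrict_iff hXE).mp hB, hdisj⟩
    · rintro ⟨hIs, B, hB, hdisj⟩
      exact ⟨hIs, B, (Matroid.isBase_restrict_iff hXE).mpr hB, hdisj⟩
  rw [hEq]
  constructor
  · rintro ⟨hIs, B, hB, hdisj⟩
    refine ⟨hIs, ?_⟩
    -- first : B is a base of M✶
    obtain ⟨B₀, hB₀, heB₀⟩ := he.exists_isBase_superset
    have heB : e ∈ B₀ := heB₀ rfl
    have hD₀ : M✶.IsBase (M.E \ B₀) := hB₀.compl_isBase_dual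
    obtain ⟨B', hB', hBB'⟩ := hB.indep.exists_isBase_superset
    have hBs : B ⊆ M.E \ {e} := hB.subset
    have heB' : e ∉ B' := by
      by_contra heB'
      obtain ⟨f, hf, hBase'⟩ := hB'.exchange hD₀ ⟨heB', fun hc => hc.2 heB⟩
      have hfe : f ≠ e := fun hfe => (hf.1.2 (hfe ▸ heB))
      have hsub : insert f (B' \ {e}) ⊆ M.E \ {e} := by
        refine insert_subset ⟨hf.1.1, by simpa using hfe⟩ ?_
        exact diff_subset_diff_left hB'.subset_ground
      have hBsub : B ⊆ insert f (B' \ {e}) := fun z hz =>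
        mem_insert_of_mem _ ⟨hBB' hz, fun hze => (hBs hz).2 hze⟩
      have := hB.eq_of_subset_indep hBase'.indep hBsub hsub
      exact hf.2 (hBB' (this ▸ (mem_insert f _)))
    have hBeq : B = B' := hB.eq_of_subset_indep hB'.indep hBB'
      (subset_diff_singleton hB'.subset_ground heB')
    subst hBeq
    have hMB : M.IsBase (M.E \ B) := hB'.compl_isBase_of_dual
    refine hMB.indep.subset (insert_subset ⟨heE, heB'⟩ ?_)
    exact fun z hz => ⟨(hIs hz).1, fun hzB => hdisj.ne_of_mem hz hzB rfl⟩
  · rintro ⟨hIs, hind⟩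
    obtain ⟨B₁, hB₁, hsub₁⟩ := hind.exists_isBase_superset
    have heB₁ : e ∈ B₁ := hsub₁ (mem_insert e I)
    have hB₁d : M✶.IsBase (M.E \ B₁) := hB₁.compl_isBase_dual
    refine ⟨hIs, M.E \ B₁, ?_, ?_⟩
    · refine hB₁d.indep.isBasis_of_subset_of_subset_closure
        (diff_subset_diff_right (by simpa using heB₁)) ?_
      rw [hB₁d.closure_eq, Matroid.dual_ground]
      exact diff_subset
    · exact Set.disjoint_sdiff_right.mono_left
        ((subset_insert e I).trans hsub₁)

lemma contract_rk (hfin : M.E.Finite) (he : M.Indep {e}) :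
    rk (contract M {e}) + 1 = rk M := by
  obtain ⟨B₀, hB₀, heB₀⟩ := he.exists_isBase_superset
  have heB : e ∈ B₀ := heB₀ rfl
  have hNi : (contract M {e}).Indep (B₀ \ {e}) := by
    rw [contract_indep_iff' he]
    refine ⟨diff_subset_diff_left hB₀.subset_ground, ?_⟩
    rw [insert_diff_singleton, insert_eq_of_mem heB]
    exact hB₀.indep
  have hNb : (contract M {e}).IsBase (B₀ \ {e}) := by
    refine hNi.isBase_of_maximal fun J hJ hsub => ?_
    rw [contract_indep_iff' he] at hJ
    obtain ⟨hJss, hJind⟩ := hJ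
    have heJ : e ∉ J := fun h => (hJss h).2 rfl
    have hB₀sub : B₀ ⊆ insert e J := by
      intro z hz
      by_cases hze : z = e
      · exact hze ▸ mem_insert e J
      · exact mem_insert_of_mem _ (hsub ⟨hz, hze⟩)
    have := hB₀.eq_of_subset_indep hJind hB₀sub
    rw [this, Set.insert_diff_self_of_notMem heJ]
  rw [rk_eq_ncard_base hNb, rk_eq_ncard_base hB₀,
    Set.ncard_diff_singleton_add_one heB (hfin.subset hB₀.subset_ground)]

lemma contract_closure_singleton_subset (he : M.Indep {e})
    (hx : (contract M {e}).Indep {x}) :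
    (contract M {e}).closure {x} ⊆ M.closure {e, x} := by
  obtain ⟨hxss, hex⟩ := (contract_indep_iff' he).mp hx
  have hxE : x ∈ M.E \ {e} := hxss rfl
  intro y hy
  have hyE : y ∈ (contract M {e}).E := Matroid.mem_ground_of_mem_closure hy
  rw [contract_ground'] at hyE
  by_cases hxy : y = x
  · exact hxy ▸ M.mem_closure_of_mem' (mem_insert_of_mem _ rfl) hyE.1
  · have hdep := (hx.mem_closure_iff_of_notMem (by simpa using hxy)).mp hy
    have hnind : ¬ (contract M {e}).Indep (insert y {x}) := hdep.not_indep
    have hyne : y ≠ e := fun h => hyE.2 (by simp [h])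
    have hni : ¬ M.Indep (insert e (insert y {x})) := by
      intro h
      refine hnind ((contract_indep_iff' he).mpr ⟨?_, h⟩)
      exact insert_subset ⟨hyE.1, by simpa using hyne⟩ (by simpa using hxE)
    have h2 : M.Dep (insert y ({e, x} : Set α)) := by
      rw [Matroid.dep_iff]
      refine ⟨fun h => hni ?_, insert_subset hyE.1 hex.subset_ground⟩
      rwa [Set.insert_comm]
    refine (hex.mem_closure_iff_of_notMem ?_).mpr h2
    simp [hyne, hxy]


lemma ncard_biUnion_le' {β γ : Type*} {s : Set β} {f : β → Set γ} {k : ℕ} (hs : s.Finite) :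
    (∀ b ∈ s, (f b).Finite) → (∀ b ∈ s, (f b).ncard ≤ k) →
    (⋃ b ∈ s, f b).ncard ≤ k * s.ncard := by
  apply Set.Finite.induction_on
    (motive := fun s _ => (∀ b ∈ s, (f b).Finite) → (∀ b ∈ s, (f b).ncard ≤ k) →
      (⋃ b ∈ s, f b).ncard ≤ k * s.ncard) s hs (by simp)
  intro a s ha hsf ih hfin hk
  rw [Set.biUnion_insert]
  have h1 : (⋃ b ∈ s, f b).ncard ≤ k * s.ncard :=
    ih (fun b hb => hfin b (mem_insert_of_mem _ hb)) (fun b hb => hk b (mem_insert_of_mem _ hb))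
  calc (f a ∪ ⋃ b ∈ s, f b).ncard ≤ (f a).ncard + (⋃ b ∈ s, f b).ncard :=
        Set.ncard_union_le _ _
    _ ≤ k + k * s.ncard := add_le_add (hk a (mem_insert _ _)) h1
    _ = k * (insert a s).ncard := by rw [Set.ncard_insert_of_notMem ha hsf]; ring

lemma points_subset_closure_card_le {ℓ : ℕ} (hfin : M.E.Finite)
    (hminor : ¬ ∃ N : Matroid α, IsMinor N M ∧ IsUnif N 2 (ℓ + 2))
    (hJ : M.Indep J) (hJ2 : J.ncard ≤ 2) {T : Set (Set α)}
    (hT : ∀ P ∈ T, Point M P ∧ P ⊆ M.closure J) :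
    T.ncard ≤ ℓ + 1 := by
  have hJfin : J.Finite := hfin.subset hJ.subset_ground
  by_contra hcon
  push_neg at hcon
  obtain ⟨T', hT'sub, hT'card⟩ := Set.exists_subset_card_eq (show ℓ + 2 ≤ T.ncard from hcon)
  have hrep : ∀ P ∈ T', ∃ x, x ∈ P ∧ M.Indep {x} ∧ P = M.closure {x} :=
    fun P hP => point_exists_rep hfin (hT P (hT'sub hP)).1
  have hTne : T'.Nonempty := Set.nonempty_of_ncard_ne_zero (by omega)
  have hαne : Nonempty α := by
    obtain ⟨P₁, hP₁⟩ := hTne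
    obtain ⟨x₁, -, -, -⟩ := hrep P₁ hP₁
    exact ⟨x₁⟩
  choose! g hg1 hg2 hg3 using hrep
  have hinj : Set.InjOn g T' := fun P hP P' hP' hgg => by
    rw [hg3 P hP, hg3 P' hP', hgg]
  set S := g '' T' with hS
  have hSE : S ⊆ M.E := by
    rintro _ ⟨P, hP, rfl⟩; exact (hg2 P hP).subset_ground rfl
  have hSfin : S.Finite := hfin.subset hSE
  have hScard : S.ncard = ℓ + 2 := by rw [hS, Set.ncard_image_of_injOn hinj, hT'card]
  have hSclJ : S ⊆ M.closure J := by
    rintro _ ⟨P, hP, rfl⟩; exact (hT P (hT'sub hP)).2 (hg1 P hP)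
  refine hminor ⟨M ↾ S, restrict_isMinor hSE, hSfin, hScard, ?_⟩
  intro I hIS
  rw [Matroid.restrict_indep_iff]
  constructor
  · rintro ⟨hI, hIS'⟩
    refine ⟨hSfin.subset hIS', ?_⟩
    calc I.ncard ≤ J.ncard :=
          ncard_le_of_indep_subset_closure hJ hJfin hI (hIS'.trans hSclJ)
      _ ≤ 2 := hJ2
  · rintro ⟨hIfin, hIcard⟩
    have hc : I.ncard = 0 ∨ I.ncard = 1 ∨ I.ncard = 2 := by omega
    rcases hc with h | h | h
    · rw [Set.ncard_eq_zero hIfin] at h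
      rw [h]; exact ⟨M.empty_indep, empty_subset _⟩
    · obtain ⟨a, rfl⟩ := Set.ncard_eq_one.mp h
      obtain ⟨P, hP, hPa⟩ := hIS rfl
      exact ⟨hPa ▸ hg2 P hP, hIS⟩
    · obtain ⟨a, b, hab, rfl⟩ := Set.ncard_eq_two.mp h
      have haS : a ∈ S := hIS (by simp)
      have hbS : b ∈ S := hIS (by simp)
      obtain ⟨P, hP, hPa⟩ := haS
      obtain ⟨P', hP', hPb⟩ := hbS
      have ha : M.Indep {a} := hPa ▸ hg2 P hP
      have hb : M.Indep {b} := hPb ▸ hg2 P' hP'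
      refine ⟨?_, hIS⟩
      have hPP' : P ≠ P' := fun h => hab (by rw [← hPa, ← hPb, h])
      have hbP : b ∉ M.closure {a} := by
        intro hmem
        apply hPP'
        rw [hg3 P hP, hg3 P' hP', hPa, hPb]
        exact closure_singleton_eq ha hb hmem
      have : M.Indep (insert b {a}) :=
        (ha.insert_indep_iff_of_notMem (by simpa using (Ne.symm hab))).mpr
          ⟨hb.subset_ground rfl, hbP⟩
      rwa [Set.pair_comm]

lemma kung_key (ℓ : ℕ) (hℓ : 2 ≤ ℓ) :
    ∀ n (M : Matroid α), M.E.Finite → rk M = n →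
      (¬ ∃ N : Matroid α, IsMinor N M ∧ IsUnif N 2 (ℓ + 2)) →
      eps M * (ℓ - 1) ≤ ℓ ^ n - 1 := by
  intro n
  induction n using Nat.strong_induction_on with
  | _ n ih =>
    intro M hfin hrk hminor
    by_cases hP : {P | Point M P} = ∅
    · have : eps M = 0 := by rw [eps, hP, Set.ncard_empty]
      simp [this]
    · obtain ⟨P₀, hP₀⟩ := Set.nonempty_iff_ne_empty.mpr hP
      obtain ⟨e, heP, he, hPe⟩ := point_exists_rep hfin hP₀
      have heE : e ∈ M.E := he.subset_ground rfl
      have hn1 : 1 ≤ n := by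
        obtain ⟨B, hB, heB⟩ := he.exists_isBase_superset
        have h1 : ({e} : Set α).ncard ≤ B.ncard :=
          Set.ncard_le_ncard heB (hfin.subset hB.subset_ground)
        rw [Set.ncard_singleton] at h1
        rw [← hrk, rk_eq_ncard_base hB]
        exact h1
      set N := contract M {e} with hN
      have hNfin : N.E.Finite := by
        rw [hN, contract_ground']
        exact hfin.subset diff_subset
      have hNrk : rk N = n - 1 := by
        have h := contract_rk hfin he
        rw [← hN] at h
        omega
      have hNminor : ¬ ∃ U : Matroid α, IsMinor U N ∧ IsUnif U 2 (ℓ + 2) := by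
        rintro ⟨U, hU, hUu⟩
        exact hminor ⟨U, isMinor_of_isMinor_contract heE hU, hUu⟩
      have IH := ih (n - 1) (by omega) N hNfin hNrk hNminor
      set F : Set α → Set (Set α) := fun Q =>
        {P | Point M P ∧ P ⊆ M.closure (insert e Q) ∧ P ≠ M.closure {e}} with hF
      have hFfin : ∀ Q, (F Q).Finite :=
        fun Q => (points_finite hfin).subset fun P hP => hP.1
      -- covering
      have hcover : {P | Point M P} ⊆
          insert (M.closure {e}) (⋃ Q ∈ {Q | Point N Q}, F Q) := by
        intro P hPpt
        by_cases hPe' : P = M.closure {e}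
        · exact hPe' ▸ mem_insert _ _
        · obtain ⟨x, hxP, hx, hPx⟩ := point_exists_rep hfin hPpt
          have hxE : x ∈ M.E := hx.subset_ground rfl
          have hxcl : x ∉ M.closure {e} := by
            intro h
            exact hPe' (by rw [hPx, ← closure_singleton_eq he hx h])
          have hxe : x ≠ e := fun h => hxcl (h ▸ M.mem_closure_self e heE)
          have hex : M.Indep (insert e {x}) := by
            have h1 : M.Indep (insert x {e}) :=
              (he.insert_indep_iff_of_notMem (by simpa using hxe)).mpr ⟨hxE, hxcl⟩
            rwa [show (insert x {e} : Set α) = insert e {x} from Set.pair_comm x e] at h1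
          have hxN : N.Indep {x} := by
            rw [hN, contract_indep_iff' he]
            exact ⟨by simp [hxE, hxe], hex⟩
          have hQpt : Point N (N.closure {x}) := point_closure_singleton hxN
          refine mem_insert_iff.mpr (Or.inr ?_)
          refine mem_biUnion hQpt ⟨hPpt, ?_, hPe'⟩
          rw [hPx]
          apply M.closure_subset_closure
          intro y hy
          rw [mem_singleton_iff] at hy
          subst hy
          exact mem_insert_of_mem _ (N.mem_closure_self y (hxN.subset_ground rfl))
      -- fiber bound
      have hbound : ∀ Q ∈ {Q | Point N Q}, (F Q).ncard ≤ ℓ := by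
        intro Q hQ
        obtain ⟨x', hx'Q, hx', hQx'⟩ := point_exists_rep hNfin hQ
        have hJ : M.Indep (insert e {x'}) := ((contract_indep_iff' he).mp hx').2
        have hJ2 : (insert e {x'} : Set α).ncard ≤ 2 :=
          le_trans (Set.ncard_insert_le _ _) (by simp)
        have hLsub : M.closure (insert e Q) ⊆ M.closure (insert e {x'}) := by
          apply M.closure_subset_closure_of_subset_closure
          intro y hy
          rcases mem_insert_iff.mp hy with rfl | hyQ
          · exact M.subset_closure _ hJ.subset_ground (mem_insert _ _)
          · rw [hQx'] at hyQ
            exact contract_closure_singleton_subset he hx' hyQ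
        have hT : ∀ P ∈ insert (M.closure {e}) (F Q),
            Point M P ∧ P ⊆ M.closure (insert e {x'}) := by
          intro P hPmem
          rcases mem_insert_iff.mp hPmem with rfl | hPF
          · refine ⟨point_closure_singleton he, ?_⟩
            exact M.closure_subset_closure (by simp)
          · exact ⟨hPF.1, hPF.2.1.trans hLsub⟩
        have hcard := points_subset_closure_card_le hfin hminor hJ hJ2 hT
        have hnot : M.closure {e} ∉ F Q := fun h => h.2.2 rfl
        rw [Set.ncard_insert_of_notMem hnot (hFfin Q)] at hcard
        omega
      -- counting
      have hPtsNfin : {Q | Point N Q}.Finite := points_finite hNfin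
      have hUfin : (⋃ Q ∈ {Q | Point N Q}, F Q).Finite :=
        hPtsNfin.biUnion fun Q _ => hFfin Q
      have h1 : eps M ≤ 1 + ℓ * eps N := by
        have hle := Set.ncard_le_ncard hcover (hUfin.insert _)
        have h2 := Set.ncard_insert_le (M.closure {e}) (⋃ Q ∈ {Q | Point N Q}, F Q)
        have h3 := ncard_biUnion_le' hPtsNfin (fun Q hQ => hFfin Q) hbound
        rw [eps, eps]
        omega
      -- arithmetic
      have hK1 : 1 ≤ ℓ ^ (n - 1) := Nat.one_le_pow _ _ (by omega)
      have hKn : ℓ * ℓ ^ (n - 1) = ℓ ^ n := by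
        rw [← pow_succ']
        congr 1
        omega
      have hmul : ℓ * (ℓ ^ (n - 1) - 1) + ℓ = ℓ * ℓ ^ (n - 1) := by
        have h := Nat.sub_add_cancel hK1
        calc ℓ * (ℓ ^ (n - 1) - 1) + ℓ = ℓ * ((ℓ ^ (n - 1) - 1) + 1) := by ring
          _ = ℓ * ℓ ^ (n - 1) := by rw [h]
      calc eps M * (ℓ - 1) ≤ (1 + ℓ * eps N) * (ℓ - 1) := Nat.mul_le_mul_right _ h1
        _ = (ℓ - 1) + ℓ * (eps N * (ℓ - 1)) := by ring
        _ ≤ (ℓ - 1) + ℓ * (ℓ ^ (n - 1) - 1) :=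
            add_le_add_right (Nat.mul_le_mul_left ℓ IH) _
        _ ≤ ℓ ^ n - 1 := by
            obtain ⟨A, hA⟩ : ∃ A, ℓ * (ℓ ^ (n - 1) - 1) = A := ⟨_, rfl⟩
            obtain ⟨B, hB⟩ : ∃ B, ℓ ^ n = B := ⟨_, rfl⟩
            rw [hKn, hB] at hmul
            rw [hA] at hmul ⊢
            rw [hB]
            omega

end KungAux

end PaperDefs


theorem stmt1 {α : Type*} (ℓ : ℕ) (hℓ : 2 ≤ ℓ) (M : Matroid α) (hfin : M.E.Finite)
    (hminor : ¬ ∃ N : Matroid α, PaperDefs.IsMinor N M ∧ IsUnif N 2 (ℓ + 2)) :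
    eps M ≤ (ℓ ^ rk M - 1) / (ℓ - 1) := by
  rw [Nat.le_div_iff_mul_le (by omega : 0 < ℓ - 1)]
  exact kung_key ℓ hℓ (rk M) M hfin rfl hminor
end

section
/- Let q ≥ 2 be an integer and M a matroid such that ε(M) > (q^{r(M)}-1)/(q-1) and such that no line of M contains q+2 or more points. Then ε(M/e) > (q^{r(M)-1}-1)/(q-1) for every non-loop element e, and r(M/e) = r(M) - 1. -/
open Set Matroid

open PaperDefs

namespace StmtProof

open Matroid Set

variable {α : Type*} {M : Matroid α} {B B' I J X P Q : Set α} {e x y : α}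

lemma closure_flat' (M : Matroid α) (X : Set α) : M.IsFlat (M.closure X) := by
  rw [Matroid.closure_def, sInter_eq_iInter]
  have hne : Nonempty ↑{F | M.IsFlat F ∧ X ∩ M.E ⊆ F} :=
    ⟨⟨M.E, M.ground_isFlat, inter_subset_right⟩⟩
  exact Matroid.IsFlat.iInter fun F => F.2.1

lemma rk_eq_ncard_base (hB : M.IsBase B) : rk M = B.ncard := by
  have himg : Set.ncard '' {B' | M.IsBase B'} = {B.ncard} := by
    apply Set.eq_singleton_iff_unique_mem.mpr
    refine ⟨⟨B, hB, rfl⟩, ?_⟩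
    rintro n ⟨B', hB', rfl⟩
    exact hB'.ncard_eq_ncard_of_isBase hB
  rw [rk, himg, csSup_singleton]

lemma rkOf_eq_ncard_basis (hI : M.IsBasis I X) : rkOf M X = I.ncard :=
  rk_eq_ncard_base hI.restrict_isBase

lemma point_iff_exists (hfin : M.E.Finite) :
    Point M P ↔ ∃ x ∈ M.E, M.Indep {x} ∧ P = M.closure {x} := by
  constructor
  · rintro ⟨hF, hr⟩
    obtain ⟨I, hI⟩ := M.exists_isBasis P hF.subset_ground
    have hc : I.ncard = 1 := by rw [← rkOf_eq_ncard_basis hI]; exact hr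
    obtain ⟨x, rfl⟩ := Set.ncard_eq_one.mp hc
    refine ⟨x, hI.indep.subset_ground rfl, hI.indep, ?_⟩
    rw [hI.closure_eq_closure, hF.closure]
  · rintro ⟨x, hxE, hx, rfl⟩
    refine ⟨closure_flat' M _, ?_⟩
    rw [rkOf_eq_ncard_basis hx.isBasis_closure, Set.ncard_singleton]

lemma points_finite (hfin : M.E.Finite) : {P | Point M P}.Finite := by
  apply (hfin.image (fun x => M.closure {x})).subset
  rintro P hP
  obtain ⟨x, hxE, -, rfl⟩ := (point_iff_exists hfin).mp hP
  exact ⟨x, hxE, rfl⟩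

lemma contract_ground_eq : (PaperDefs.contract M {e}).E = M.E \ {e} := rfl

lemma contract_indep_iff (he : M.Indep {e}) :
    (PaperDefs.contract M {e}).Indep I ↔ I ⊆ M.E \ {e} ∧ M.Indep (insert e I) := by
  have hD : M.E \ {e} ⊆ M✶.E := diff_subset
  have hbase : ∀ B', (M✶ ↾ (M.E \ {e})).IsBase B' ↔ M✶.IsBasis B' (M.E \ {e}) := by
    intro B'
    rw [isBase_restrict_iff', isBasis'_iff_isBasis hD]
  have hiff : (PaperDefs.contract M {e}).Indep I ↔ I ⊆ M.E \ {e} ∧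
      ∃ B', (M✶ ↾ (M.E \ {e})).IsBase B' ∧ Disjoint I B' := dual_indep_iff_exists'
  rw [hiff]
  constructor
  · rintro ⟨hIss, B', hB', hdisj⟩
    rw [hbase] at hB'
    refine ⟨hIss, ?_⟩
    have hB'E : B' ⊆ M.E := hB'.subset.trans diff_subset
    obtain ⟨B₀, hB₀, hB₀ss⟩ := (coindep_iff_exists hB'E).mp hB'.indep
    obtain ⟨B₂, hB₂, heB₂, hB₂ss⟩ := he.exists_isBase_subset_union_isBase hB₀
    have heB₂' : e ∈ B₂ := heB₂ rfl
    have hB₂B' : Disjoint B₂ B' := by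
      refine Set.disjoint_left.mpr fun a haB₂ haB' => ?_
      rcases hB₂ss haB₂ with h | h
      · exact (hB'.subset haB').2 h
      · exact (hB₀ss h).2 haB'
    have hdb : M✶.IsBase (M.E \ B₂) := hB₂.compl_isBase_dual
    have hkey : B' = M.E \ B₂ :=
      hB'.eq_of_subset_indep hdb.indep (subset_diff.mpr ⟨hB'E, hB₂B'.symm⟩)
        (diff_subset_diff_right (singleton_subset_iff.mpr heB₂'))
    have hIB₂ : insert e I ⊆ B₂ := by
      refine insert_subset heB₂' fun a haI => ?_
      have haE : a ∈ M.E := (hIss haI).1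
      by_contra haB₂
      exact Set.disjoint_left.mp hdisj haI (by rw [hkey]; exact ⟨haE, haB₂⟩)
    exact hB₂.indep.subset hIB₂
  · rintro ⟨hIss, hind⟩
    obtain ⟨B, hB, hsub⟩ := hind.exists_isBase_superset
    have heB : e ∈ B := hsub (mem_insert _ _)
    have hB'ss : M.E \ B ⊆ M.E \ {e} :=
      diff_subset_diff_right (singleton_subset_iff.mpr heB)
    have hdb : M✶.IsBase (M.E \ B) := hB.compl_isBase_dual
    have hbasis : M✶.IsBasis (M.E \ B) (M.E \ {e}) := by
      refine hdb.indep.isBasis_of_forall_insert hB'ss fun a ha => ?_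
      rw [dep_iff]
      refine ⟨fun hcon => ?_, insert_subset (hD ha.1) (hB'ss.trans hD)⟩
      obtain ⟨-, B₃, hB₃, hdisj₃⟩ := dual_indep_iff_exists'.mp hcon
      have haB : a ∈ B := by
        rcases ha with ⟨⟨haE, -⟩, hna⟩
        by_contra h
        exact hna ⟨haE, h⟩
      have hB₃B : B₃ ⊆ B := fun b hb => by
        by_contra hbB
        exact Set.disjoint_right.mp hdisj₃ hb (Or.inr ⟨hB₃.subset_ground hb, hbB⟩)
      have hB₃eq : B₃ = B := hB₃.eq_of_subset_isBase hB hB₃B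
      exact Set.disjoint_right.mp hdisj₃ (by rw [hB₃eq]; exact haB) (mem_insert _ _)
    refine ⟨hIss, M.E \ B, (hbase _).mpr hbasis, ?_⟩
    exact Set.disjoint_left.mpr fun a haI haB => haB.2 (hsub (mem_insert_of_mem _ haI))

lemma contract_base_diff (hfin : M.E.Finite) (he : M.Indep {e}) (hB : M.IsBase B)
    (heB : e ∈ B) : (PaperDefs.contract M {e}).IsBase (B \ {e}) := by
  have hCi : (PaperDefs.contract M {e}).Indep (B \ {e}) := by
    rw [contract_indep_iff he]
    refine ⟨diff_subset_diff_left hB.subset_ground, ?_⟩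
    rw [insert_diff_singleton, insert_eq_of_mem heB]
    exact hB.indep
  refine hCi.isBase_of_forall_insert fun x hx hind => ?_
  rw [contract_indep_iff he] at hind
  have hxE : x ∈ M.E := hx.1.1
  have hxe : x ≠ e := hx.1.2
  have hxB : x ∉ B := fun h => hx.2 ⟨h, hxe⟩
  have hxBi : M.Indep (insert x B) := by
    have h2 := hind.2
    rwa [Set.insert_comm, insert_diff_singleton, insert_eq_of_mem heB] at h2
  have := hB.eq_of_subset_indep hxBi (subset_insert _ _)
  exact hxB (this ▸ mem_insert _ _)

lemma pair_indep' (hfin : M.E.Finite) (he : M.Indep {e}) (hx : M.Indep {x})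
    (hne : M.closure {x} ≠ M.closure {e}) : M.Indep (insert e {x}) := by
  have hxe : x ≠ e := fun h => hne (by rw [h])
  have hxE : x ∈ M.E := hx.subset_ground rfl
  have h1 : M.Indep (insert x {e}) := by
    rw [he.insert_indep_iff_of_notMem (by simpa using hxe)]
    refine ⟨hxE, fun hmem => ?_⟩
    obtain ⟨J, hJ, hxJ⟩ := hx.subset_isBasis_of_subset (singleton_subset_iff.mpr hmem)
      (M.closure_subset_ground _)
    have hJcard : J.ncard = 1 := by
      rw [← rkOf_eq_ncard_basis hJ, rkOf_eq_ncard_basis he.isBasis_closure, ncard_singleton]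
    have hJfin : J.Finite := hfin.subset hJ.indep.subset_ground
    have hJx : J = {x} :=
      (Set.eq_of_subset_of_ncard_le hxJ (by rw [hJcard, ncard_singleton]) hJfin).symm
    apply hne
    rw [← hJx, hJ.closure_eq_closure, closure_closure]
  rwa [(pair_comm x e : ({x, e} : Set α) = {e, x})] at h1

end StmtProof
namespace StmtProof

open Matroid Set

variable {α : Type*} {M : Matroid α} {P Q : Set α} {e : α}

/-- Claim A: a point `P ≠ cl{e}` of `M` has a representative `x` that is a nonloop of the
contraction, with `cl_C (P \ {e}) = cl_C {x}` a point of the contraction. -/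
lemma claimA (hfin : M.E.Finite) (heE : e ∈ M.E) (he : M.Indep {e})
    (hP : Point M P) (hPne : P ≠ M.closure {e}) :
    ∃ x, x ∈ (PaperDefs.contract M {e}).E ∧ M.Indep {x} ∧ (PaperDefs.contract M {e}).Indep {x} ∧
      P = M.closure {x} ∧
      (PaperDefs.contract M {e}).closure (P \ {e}) = (PaperDefs.contract M {e}).closure {x} ∧
      Point (PaperDefs.contract M {e}) ((PaperDefs.contract M {e}).closure (P \ {e})) := by
  set C := PaperDefs.contract M {e} with hC
  have hCfin : C.E.Finite := hfin.subset diff_subset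
  obtain ⟨x, hxE, hx, rfl⟩ := (point_iff_exists hfin).mp hP
  have hpair : M.Indep (insert e {x}) := pair_indep' hfin he hx hPne
  have hxe : x ≠ e := fun h => hPne (by rw [h])
  have hxC : x ∈ C.E := ⟨hxE, hxe⟩
  have hCx : C.Indep {x} := by
    rw [hC, contract_indep_iff he]
    exact ⟨singleton_subset_iff.mpr hxC, hpair⟩
  have hxP : x ∈ M.closure {x} := M.subset_closure {x} (by simpa using hxE) rfl
  have hbasis : C.IsBasis {x} (M.closure {x} \ {e}) := by
    refine hCx.isBasis_of_forall_insert (singleton_subset_iff.mpr ⟨hxP, hxe⟩) ?_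
    rintro y ⟨⟨hyP, hye⟩, hyx⟩
    have hyx' : y ≠ x := by simpa using hyx
    have hye' : y ≠ e := hye
    have hyE : y ∈ M.E := M.closure_subset_ground _ hyP
    rw [dep_iff]
    constructor
    · intro hcon
      rw [hC, contract_indep_iff he] at hcon
      have h2 := hcon.2
      rw [Set.insert_comm] at h2
      have hyni : y ∉ insert e ({x} : Set α) := by simp [hye', hyx']
      rw [hpair.insert_indep_iff_of_notMem hyni] at h2
      exact h2.2 (M.closure_subset_closure (by simp) hyP)
    · rw [hC, contract_ground_eq]
      exact insert_subset ⟨hyE, hye⟩ (singleton_subset_iff.mpr ⟨hxE, hxe⟩)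
  have hfP : C.closure (M.closure {x} \ {e}) = C.closure {x} :=
    hbasis.closure_eq_closure.symm
  refine ⟨x, hxC, hx, hCx, rfl, hfP, ?_⟩
  rw [hfP]
  exact (point_iff_exists hCfin).mpr ⟨x, hxC, hCx, rfl⟩

/-- Claim B: each fiber of `P ↦ cl_C (P \ {e})` over the points `≠ cl{e}` has size at most
`q`, given that no line has `q+2` points. -/
lemma claimB (q : ℕ) (hq : 2 ≤ q) (hfin : M.E.Finite) (heE : e ∈ M.E) (he : M.Indep {e})
    (hline : ∀ L, Line M L → {P | Point M P ∧ P ⊆ L}.ncard < q + 2)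
    (hP : Point M P) (hPne : P ≠ M.closure {e}) :
    {Q | Point M Q ∧ Q ≠ M.closure {e} ∧
      (PaperDefs.contract M {e}).closure (Q \ {e}) = (PaperDefs.contract M {e}).closure (P \ {e})}.ncard ≤ q := by
  set C := PaperDefs.contract M {e} with hC
  set E0 : Set α := M.closure {e} with hE0
  obtain ⟨x, hxC, hx, hCx, hPeq, hfPx, -⟩ := claimA hfin heE he hP hPne
  have hpair : M.Indep (insert e {x}) := pair_indep' hfin he hx (hPeq ▸ hPne)
  have hxe : x ≠ e := hxC.2
  set L : Set α := M.closure (insert e {x}) with hL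
  have hLine : Line M L := by
    refine ⟨closure_flat' M _, ?_⟩
    rw [rkOf_eq_ncard_basis hpair.isBasis_closure,
      Set.ncard_insert_of_notMem (by simpa using hxe.symm) (finite_singleton x),
      ncard_singleton]
  have hsub : {Q | Point M Q ∧ Q ≠ E0 ∧ C.closure (Q \ {e}) = C.closure (P \ {e})} ⊆
      {R | Point M R ∧ R ⊆ L} \ {E0} := by
    rintro Q ⟨hQ, hQne, hQf⟩
    refine ⟨⟨hQ, ?_⟩, hQne⟩
    obtain ⟨y, hyC, hy, hCy, hQeq, hfQy, -⟩ := claimA hfin heE he hQ hQne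
    have hyL : y ∈ L := by
      by_cases hyx : y = x
      · subst hyx
        exact M.subset_closure _ (insert_subset heE (by simpa using hyC.1))
          (mem_insert_of_mem _ rfl)
      · have hymem : y ∈ C.closure {x} := by
          rw [← hfPx, ← hQf, hfQy]
          exact C.subset_closure {y} (singleton_subset_iff.mpr hyC) rfl
        have hdep : ¬ C.Indep (insert y {x}) := by
          intro hcon
          rw [hCx.insert_indep_iff_of_notMem (by simpa using hyx)] at hcon
          exact hcon.2 hymem
        have hnM : ¬ M.Indep (insert e (insert y {x})) := by
          intro hcon
          apply hdep
          rw [hC, contract_indep_iff he]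
          exact ⟨insert_subset hyC (singleton_subset_iff.mpr hxC), hcon⟩
        by_contra hyL
        apply hnM
        rw [Set.insert_comm]
        have hye : y ≠ e := fun h => hyC.2 h
        have hyni : y ∉ insert e ({x} : Set α) := by simp [hye, hyx]
        rw [hpair.insert_indep_iff_of_notMem hyni]
        exact ⟨hyC.1, fun h => hyL h⟩
    rw [hQeq]
    calc M.closure {y} ⊆ M.closure L := M.closure_subset_closure (by simpa using hyL)
      _ = L := (closure_flat' M _).closure
  have hE0mem : E0 ∈ {R | Point M R ∧ R ⊆ L} := by
    refine ⟨(point_iff_exists hfin).mpr ⟨e, heE, he, rfl⟩, ?_⟩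
    exact M.closure_subset_closure (by simp)
  have hSfin : {R | Point M R ∧ R ⊆ L}.Finite :=
    (points_finite hfin).subset fun R hR => hR.1
  have hcard : {R | Point M R ∧ R ⊆ L}.ncard ≤ q + 1 := by
    have := hline L hLine
    omega
  calc {Q | Point M Q ∧ Q ≠ E0 ∧ C.closure (Q \ {e}) = C.closure (P \ {e})}.ncard
      ≤ ({R | Point M R ∧ R ⊆ L} \ {E0}).ncard := ncard_le_ncard hsub hSfin.diff
    _ = {R | Point M R ∧ R ⊆ L}.ncard - 1 := ncard_diff_singleton_of_mem hE0mem
    _ ≤ q := by omega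

/-- Main counting lemma. -/
lemma eps_le (q : ℕ) (hq : 2 ≤ q) (hfin : M.E.Finite) (heE : e ∈ M.E) (he : M.Indep {e})
    (hline : ∀ L, Line M L → {P | Point M P ∧ P ⊆ L}.ncard < q + 2) :
    eps M ≤ q * eps (PaperDefs.contract M {e}) + 1 := by
  classical
  set C := PaperDefs.contract M {e} with hC
  have hCfin : C.E.Finite := hfin.subset diff_subset
  set E0 : Set α := M.closure {e} with hE0
  have hE0pt : Point M E0 := (point_iff_exists hfin).mpr ⟨e, heE, he, rfl⟩
  have hPfin : {P | Point M P}.Finite := points_finite hfin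
  have hP'fin : {P | Point C P}.Finite := points_finite hCfin
  set f : Set α → Set α := fun P => C.closure (P \ {e}) with hf
  have hSfin : ({P | Point M P} \ {E0}).Finite := hPfin.diff
  set s : Finset (Set α) := hSfin.toFinset with hs
  have hmem_s : ∀ P, P ∈ s ↔ Point M P ∧ P ≠ E0 := by
    intro P
    rw [hs, Set.Finite.mem_toFinset]
    simp [mem_diff]
  have hcard : s.card ≤ q * (s.image f).card := by
    apply Finset.card_le_mul_card_image
    intro a ha
    obtain ⟨P₀, hP₀s, hfP₀⟩ := Finset.mem_image.mp ha
    rw [hmem_s] at hP₀s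
    have hfil : ((s.filter fun Q => f Q = a) : Set (Set α)) ⊆
        {Q | Point M Q ∧ Q ≠ E0 ∧ f Q = f P₀} := by
      intro Q hQ
      simp only [Finset.coe_filter, mem_setOf_eq] at hQ
      rw [hmem_s] at hQ
      exact ⟨hQ.1.1, hQ.1.2, by rw [hQ.2, ← hfP₀]⟩
    have htfin : {Q | Point M Q ∧ Q ≠ E0 ∧ f Q = f P₀}.Finite :=
      hPfin.subset fun Q hQ => hQ.1
    calc (s.filter fun Q => f Q = a).card
        = ((s.filter fun Q => f Q = a) : Set (Set α)).ncard := (ncard_coe_finset _).symm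
      _ ≤ {Q | Point M Q ∧ Q ≠ E0 ∧ f Q = f P₀}.ncard := ncard_le_ncard hfil htfin
      _ ≤ q := claimB q hq hfin heE he hline hP₀s.1 hP₀s.2
  have himg : ((s.image f : Finset (Set α)) : Set (Set α)) ⊆ {P | Point C P} := by
    intro a ha
    rw [Finset.coe_image] at ha
    obtain ⟨P, hPs, rfl⟩ := ha
    rw [Finset.mem_coe, hmem_s] at hPs
    obtain ⟨-, -, -, -, -, -, hpt⟩ := claimA hfin heE he hPs.1 hPs.2
    exact hpt
  have h2 : (s.image f).card ≤ eps C := by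
    rw [← ncard_coe_finset]
    exact ncard_le_ncard himg hP'fin
  have hE0mem : E0 ∈ {P | Point M P} := hE0pt
  have h1 : eps M = s.card + 1 := by
    have hh := ncard_diff_singleton_add_one hE0mem hPfin
    rw [eps, ← hh, hs, Set.ncard_eq_toFinset_card _ hSfin]
  have h3 : q * (s.image f).card ≤ q * eps C := Nat.mul_le_mul_left _ h2
  omega

end StmtProof
theorem stmt2 {α : Type*} (q : ℕ) (hq : 2 ≤ q) (M : Matroid α) (hfin : M.E.Finite)
    (hdense : (q ^ rk M - 1) / (q - 1) < eps M)
    (hline : ∀ L, Line M L → {P | Point M P ∧ P ⊆ L}.ncard < q + 2) :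
    ∀ e ∈ M.E, ¬ Loop M e →
      (q ^ (rk M - 1) - 1) / (q - 1) < eps (PaperDefs.contract M {e}) ∧
        rk (PaperDefs.contract M {e}) = rk M - 1 := by
  intro e heE hloop
  have he : M.Indep {e} := by
    by_contra h
    exact hloop ⟨heE, h⟩
  obtain ⟨B, hB, heB⟩ := he.exists_isBase_superset
  have heB' : e ∈ B := heB rfl
  have hBfin : B.Finite := hfin.subset hB.subset_ground
  have hrk : rk M = B.ncard := StmtProof.rk_eq_ncard_base hB
  have hrkC : rk (PaperDefs.contract M {e}) = rk M - 1 := by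
    rw [StmtProof.rk_eq_ncard_base (StmtProof.contract_base_diff hfin he hB heB'), hrk,
      Set.ncard_diff_singleton_of_mem heB']
  refine ⟨?_, hrkC⟩
  have hrpos : 1 ≤ rk M := by
    rw [hrk]
    exact (Set.ncard_pos hBfin).mpr ⟨e, heB'⟩
  set G : ℕ → ℕ := fun n => ∑ i ∈ Finset.range n, q ^ i with hG
  have hdiv : ∀ n, (q ^ n - 1) / (q - 1) = G n := by
    intro n
    have hkey : (q - 1) * G n = q ^ n - 1 := by
      induction n with
      | zero => simp [hG]
      | succ n ih =>
        have h1 : 1 ≤ q ^ n := Nat.one_le_pow _ _ (by omega)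
        have h2 : q ^ (n + 1) = q * q ^ n := by rw [pow_succ, mul_comm]
        have h3 : (q - 1) * q ^ n = q * q ^ n - 1 * q ^ n := by rw [← Nat.sub_mul]
        have h4 : q ^ n ≤ q * q ^ n := Nat.le_mul_of_pos_left _ (by omega)
        simp only [hG] at ih ⊢
        rw [Finset.sum_range_succ, mul_add, ih, h3, h2]
        omega
    rw [← hkey, Nat.mul_div_cancel_left _ (by omega : 0 < q - 1)]
  have hsucc : ∀ n, G (n + 1) = q * G n + 1 := fun n => by simp only [hG]; exact geom_sum_succ
  obtain ⟨m, hm⟩ : ∃ m, rk M = m + 1 := ⟨rk M - 1, by omega⟩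
  have hle := StmtProof.eps_le q hq hfin heE he hline
  rw [hdiv, hm, hsucc] at hdense
  rw [hm, Nat.add_sub_cancel, hdiv]
  have hmul : q * G m < q * eps (PaperDefs.contract M {e}) := by omega
  exact Nat.lt_of_mul_lt_mul_left hmul
end

section
/- Let t, ℓ ≥ 2 be integers, q a prime power, and let M be a matroid with no U_{2,ℓ+2}-minor that is q-dense (ε(M) > (q^{r(M)}-1)/(q-1)) and satisfies (√5 - 1)^{r(M)-1} ≥ ℓ^{t-1}. Then M has a q-dense restriction M₀ such that r(M₀) ≥ t and every cocircuit of M₀ has rank at least r(M₀) - 1. -/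
open Set Matroid

open PaperDefs

namespace KungAux

variable {α : Type*} {M : Matroid α} {B I J X Y F H P L C R : Set α} {e f : α}

lemma rk_eq_ncard_base (hB : M.IsBase B) : rk M = B.ncard := by
  have h : Set.ncard '' {B' | M.IsBase B'} = {B.ncard} := by
    apply subset_antisymm
    · rintro n ⟨B', hB', rfl⟩
      exact hB'.ncard_eq_ncard_of_isBase hB
    · rintro n rfl
      exact ⟨B, hB, rfl⟩
  rw [rk, h, csSup_singleton]

lemma rkOf_eq_ncard_basis' (hI : M.IsBasis' I X) : rkOf M X = I.ncard :=
  rk_eq_ncard_base (isBase_restrict_iff'.2 hI)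

lemma rkOf_eq_ncard_basis (hI : M.IsBasis I X) : rkOf M X = I.ncard :=
  rkOf_eq_ncard_basis' hI.isBasis'

lemma rk_eq_rkOf_ground : rk M = rkOf M M.E := by
  rw [rkOf, restrict_ground_eq_self]

lemma rk_restrict_eq_rkOf : rk (M ↾ X) = rkOf M X := rfl

lemma rkOf_restrict_eq (hYX : Y ⊆ X) : rkOf (M ↾ X) Y = rkOf M Y := by
  rw [rkOf, rkOf, restrict_restrict_eq _ hYX]

lemma ncard_le_rkOf_of_indep (hI : M.Indep I) (hIX : I ⊆ X) (hX : X.Finite) :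
    I.ncard ≤ rkOf M X := by
  obtain ⟨J, hJ, hIJ⟩ := hI.subset_isBasis'_of_subset hIX
  rw [rkOf_eq_ncard_basis' hJ]
  exact ncard_le_ncard hIJ (hX.subset hJ.subset)

lemma rkOf_indep_eq (hI : M.Indep I) : rkOf M I = I.ncard :=
  rkOf_eq_ncard_basis' hI.isBasis_self.isBasis'

lemma rkOf_le_ncard (hX : X.Finite) : rkOf M X ≤ X.ncard := by
  obtain ⟨I, hI⟩ := M.exists_isBasis' X
  rw [rkOf_eq_ncard_basis' hI]
  exact ncard_le_ncard hI.subset hX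

lemma rkOf_le_of_subset (hXY : X ⊆ Y) (hY : Y.Finite) : rkOf M X ≤ rkOf M Y := by
  obtain ⟨I, hI⟩ := M.exists_isBasis' X
  rw [rkOf_eq_ncard_basis' hI]
  exact ncard_le_rkOf_of_indep hI.indep (hI.subset.trans hXY) hY

lemma rkOf_closure_eq (hX : X ⊆ M.E) : rkOf M (M.closure X) = rkOf M X := by
  obtain ⟨I, hI⟩ := M.exists_isBasis X hX
  rw [rkOf_eq_ncard_basis hI.isBasis_closure_right, rkOf_eq_ncard_basis hI]

lemma rkOf_insert_le (hX : X.Finite) : rkOf M (insert e X) ≤ rkOf M X + 1 := by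
  obtain ⟨I, hI⟩ := M.exists_isBasis' X
  obtain ⟨J, hJ, hIJ⟩ := hI.indep.subset_isBasis'_of_subset (hI.subset.trans (subset_insert _ _))
  have hJsub : J ⊆ insert e I := by
    intro x hxJ
    by_cases hxe : x = e
    · simp [hxe]
    by_cases hxI : x ∈ I
    · exact Or.inr hxI
    exfalso
    have hxX : x ∈ X := by
      have := hJ.subset hxJ
      rcases this with h | h
      · exact absurd h hxe
      · exact h
    exact hI.insert_not_indep ⟨hxX, hxI⟩ (hJ.indep.subset (insert_subset hxJ hIJ))
  rw [rkOf_eq_ncard_basis' hJ, rkOf_eq_ncard_basis' hI]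
  calc J.ncard ≤ (insert e I).ncard :=
        ncard_le_ncard hJsub (((hX.subset hI.subset).insert e))
    _ ≤ I.ncard + 1 := ncard_insert_le _ _

lemma exists_mem_indep_of_one_le_rkOf (h1 : 1 ≤ rkOf M X) : ∃ e ∈ X, M.Indep {e} := by
  obtain ⟨I, hI⟩ := M.exists_isBasis' X
  rw [rkOf_eq_ncard_basis' hI] at h1
  have hne : I.Nonempty := by
    rcases I.eq_empty_or_nonempty with rfl | h
    · simp at h1
    · exact h
  obtain ⟨a, ha⟩ := hne
  exact ⟨a, hI.subset ha, hI.indep.subset (singleton_subset_iff.2 ha)⟩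

lemma flat_eq_of_subset_of_rkOf_le {F₁ F₂ : Set α} (hF₁ : M.IsFlat F₁) (hF₂ : M.IsFlat F₂)
    (h12 : F₁ ⊆ F₂) (hfin : F₂.Finite) (hr : rkOf M F₂ ≤ rkOf M F₁) : F₁ = F₂ := by
  obtain ⟨I, hI⟩ := M.exists_isBasis F₁ hF₁.subset_ground
  obtain ⟨J, hJ, hIJ⟩ := hI.indep.subset_isBasis_of_subset (hI.subset.trans h12) hF₂.subset_ground
  have hIJ' : I = J := by
    apply Set.eq_of_subset_of_ncard_le hIJ _ (hfin.subset hJ.subset)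
    rw [← rkOf_eq_ncard_basis hI, ← rkOf_eq_ncard_basis hJ]
    exact hr
  apply subset_antisymm h12
  have := hJ.subset_closure
  rw [← hIJ'] at this
  calc F₂ ⊆ M.closure I := this
    _ ⊆ M.closure F₁ := M.closure_subset_closure hI.subset
    _ = F₁ := hF₁.closure

lemma rkOf_submod (hX : X ⊆ M.E) (hY : Y ⊆ M.E) (hfin : (X ∪ Y).Finite) :
    rkOf M (X ∪ Y) + rkOf M (X ∩ Y) ≤ rkOf M X + rkOf M Y := by
  obtain ⟨I, hI⟩ := M.exists_isBasis (X ∩ Y) (inter_subset_left.trans hX)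
  obtain ⟨J, hJ, hIJ⟩ := hI.indep.subset_isBasis_of_subset
    (hI.subset.trans (inter_subset_left.trans subset_union_left)) (union_subset hX hY)
  have hJfin : J.Finite := hfin.subset hJ.subset
  have hJX : J ∩ X ∪ J ∩ Y = J := by
    rw [← inter_union_distrib_left, inter_eq_left]
    exact hJ.subset
  have hJXY : (J ∩ X) ∩ (J ∩ Y) = I := by
    have hset : (J ∩ X) ∩ (J ∩ Y) = J ∩ (X ∩ Y) := by
      ext x; constructor
      · rintro ⟨⟨h1, h2⟩, ⟨h3, h4⟩⟩; exact ⟨h1, h2, h4⟩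
      · rintro ⟨h1, h2, h3⟩; exact ⟨⟨h1, h2⟩, ⟨h1, h3⟩⟩
    rw [hset]
    have : I = J ∩ (X ∩ Y) :=
      hI.eq_of_subset_indep (hJ.indep.inter_right (X ∩ Y))
        (subset_inter hIJ hI.subset) inter_subset_right
    exact this.symm
  have key : (J ∩ X).ncard + (J ∩ Y).ncard = J.ncard + I.ncard := by
    have := Set.ncard_union_add_ncard_inter (J ∩ X) (J ∩ Y) (hJfin.inter_of_left X)
      (hJfin.inter_of_left Y)
    rw [hJX, hJXY] at this
    omega
  have h1 : (J ∩ X).ncard ≤ rkOf M X :=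
    ncard_le_rkOf_of_indep (hJ.indep.inter_right X) inter_subset_right (hfin.subset subset_union_left)
  have h2 : (J ∩ Y).ncard ≤ rkOf M Y :=
    ncard_le_rkOf_of_indep (hJ.indep.inter_right Y) inter_subset_right (hfin.subset subset_union_right)
  rw [rkOf_eq_ncard_basis hJ, rkOf_eq_ncard_basis hI]
  omega



lemma closure_flat' (M : Matroid α) (X : Set α) : M.IsFlat (M.closure X) := by
  have hne : Nonempty {F // M.IsFlat F ∧ X ∩ M.E ⊆ F} :=
    ⟨⟨M.E, M.ground_isFlat, inter_subset_right⟩⟩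
  have h : M.closure X = ⋂ F : {F // M.IsFlat F ∧ X ∩ M.E ⊆ F}, F.1 := by
    rw [closure_def]
    ext y
    constructor
    · intro hy
      exact mem_iInter.2 fun F => (mem_sInter.1 hy) F.1 F.2
    · intro hy
      exact mem_sInter.2 fun F hF => (mem_iInter.1 hy) ⟨F, hF⟩
  rw [h]
  exact IsFlat.iInter fun F => F.2.1

lemma flat_iff_closure_self : M.IsFlat F ↔ M.closure F = F ∧ F ⊆ M.E := by
  constructor
  · intro hF
    exact ⟨hF.closure, hF.subset_ground⟩
  · rintro ⟨h, hFE⟩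
    rw [← h]
    exact closure_flat' M F

lemma closure_restrict_eq (hR : R ⊆ M.E) (hXR : X ⊆ R) :
    (M ↾ R).closure X = M.closure X ∩ R := by
  obtain ⟨I, hI⟩ := M.exists_isBasis X (hXR.trans hR)
  have hIR : (M ↾ R).IsBasis I X := (isBasis_restrict_iff hR).2 ⟨hI, hXR⟩
  rw [hIR.closure_eq_closure.symm, hI.closure_eq_closure.symm]
  ext x
  rw [mem_inter_iff]
  by_cases hxR : x ∈ R
  · have hxE : x ∈ M.E := hR hxR
    rw [(hI.indep.indep_restrict_of_subset (hI.subset.trans hXR)).mem_closure_iff',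
      hI.indep.mem_closure_iff']
    simp only [restrict_ground_eq, restrict_indep_iff]
    constructor
    · rintro ⟨-, h⟩
      exact ⟨⟨hxE, fun hind => h ⟨hind, insert_subset hxR (hI.subset.trans hXR)⟩⟩, hxR⟩
    · rintro ⟨⟨-, h⟩, -⟩
      exact ⟨hxR, fun hind => h hind.1⟩
  · constructor
    · intro hx
      have := (M ↾ R).closure_subset_ground I hx
      rw [restrict_ground_eq] at this
      exact absurd this hxR
    · rintro ⟨-, hx⟩
      exact absurd hx hxR

lemma flat_restrict_iff (hF : M.IsFlat F) :
    (M ↾ F).IsFlat P ↔ M.IsFlat P ∧ P ⊆ F := by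
  have hFE := hF.subset_ground
  constructor
  · intro hP
    have hPF : P ⊆ F := hP.subset_ground
    have h1 : (M ↾ F).closure P = P := hP.closure
    rw [closure_restrict_eq hFE hPF] at h1
    have h2 : M.closure P ⊆ F := by
      calc M.closure P ⊆ M.closure F := M.closure_subset_closure hPF
        _ = F := hF.closure
    rw [inter_eq_left.2 h2] at h1
    exact ⟨flat_iff_closure_self.2 ⟨h1, hPF.trans hFE⟩, hPF⟩
  · rintro ⟨hP, hPF⟩
    apply flat_iff_closure_self.2
    refine ⟨?_, by simpa using hPF⟩
    rw [closure_restrict_eq hFE hPF, hP.closure, inter_eq_left.2 hPF]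

/-- Points of `M` inside a set `F`. -/
def ptsIn (M : Matroid α) (F : Set α) : Set (Set α) :=
  {P | M.IsFlat P ∧ P ⊆ F ∧ rkOf M P = 1}

lemma ptsIn_mono (hXY : X ⊆ Y) : ptsIn M X ⊆ ptsIn M Y :=
  fun P ⟨h1, h2, h3⟩ => ⟨h1, h2.trans hXY, h3⟩

lemma indep_singleton_of_not_mem_closure_empty (he : e ∈ M.E) (h : e ∉ M.closure ∅) :
    M.Indep {e} := by
  have h0 : M.Indep (∅ : Set α) := M.empty_indep
  have h1 := (h0.insert_indep_iff_of_notMem (e := e) (by simp)).2 ⟨he, h⟩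
  simpa using h1

lemma not_mem_closure_empty_of_indep_singleton (h : M.Indep {e}) : e ∉ M.closure ∅ := by
  intro hmem
  have h0 : M.Indep (∅ : Set α) := M.empty_indep
  have h1 : M.Dep (insert e ∅) := h0.insert_dep_iff.2 ⟨hmem, by simp⟩
  simp only [insert_empty_eq] at h1
  exact h1.not_indep h

lemma rkOf_closure_singleton (he : M.Indep {e}) :
    M.IsFlat (M.closure {e}) ∧ rkOf M (M.closure {e}) = 1 := by
  refine ⟨closure_flat' M _, ?_⟩
  rw [rkOf_closure_eq he.subset_ground, rkOf_indep_eq he, ncard_singleton]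

lemma point_eq_closure_of_mem (hP : M.IsFlat P) (h1 : rkOf M P = 1) (hfinP : P.Finite)
    (he : e ∈ P) (hne : M.Indep {e}) : P = M.closure {e} := by
  apply subset_antisymm
  · intro f hf
    by_contra hfcl
    have hfe : f ≠ e := by
      intro h
      subst h
      exact hfcl (M.mem_closure_self f (hP.subset_ground hf))
    have hind : M.Indep (insert f {e}) := by
      rw [hne.insert_indep_iff_of_notMem (by simpa using hfe)]
      exact ⟨hP.subset_ground hf, hfcl⟩
    have hcard : (insert f ({e} : Set α)).ncard = 2 := Set.ncard_pair hfe
    have := ncard_le_rkOf_of_indep hind (insert_subset hf (singleton_subset_iff.2 he)) hfinP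
    rw [hcard, h1] at this
    omega
  · calc M.closure {e} ⊆ M.closure P := M.closure_subset_closure (singleton_subset_iff.2 he)
      _ = P := hP.closure

lemma point_exists_nonloop (hE : M.E.Finite) (hP : P ∈ ptsIn M F) :
    ∃ e ∈ P, M.Indep {e} ∧ P = M.closure {e} := by
  obtain ⟨hPf, hPF, h1⟩ := hP
  obtain ⟨e, heP, hei⟩ := exists_mem_indep_of_one_le_rkOf (M := M) (X := P) (by omega)
  exact ⟨e, heP, hei, point_eq_closure_of_mem hPf h1 (hE.subset hPf.subset_ground) heP hei⟩

lemma ptsIn_finite (hE : M.E.Finite) (hF : F ⊆ M.E) : (ptsIn M F).Finite := by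
  apply Set.Finite.subset (((hE.subset hF).image (fun e => M.closure {e})))
  rintro P hP
  have hPfin : P.Finite := hE.subset hP.1.subset_ground
  obtain ⟨hPf, hPF, h1⟩ := hP
  obtain ⟨e, heP, hei⟩ := exists_mem_indep_of_one_le_rkOf (M := M) (X := P) (by omega)
  exact ⟨e, hPF heP, (point_eq_closure_of_mem hPf h1 hPfin heP hei).symm⟩

lemma point_eq_of_subset (hE : M.E.Finite) {P Q : Set α} (hP : M.IsFlat P) (hQ : M.IsFlat Q)
    (h1 : rkOf M P = 1) (h2 : rkOf M Q = 1) (hPQ : P ⊆ Q) : P = Q :=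
  flat_eq_of_subset_of_rkOf_le hP hQ hPQ (hE.subset hQ.subset_ground) (by omega)

lemma ncard_le_mul_fiber {β γ : Type*} {S : Set β} {T : Set γ} (hS : S.Finite) (hT : T.Finite)
    {f : β → γ} (hmaps : ∀ x ∈ S, f x ∈ T) {n : ℕ}
    (hfib : ∀ y ∈ T, {x | x ∈ S ∧ f x = y}.ncard ≤ n) : S.ncard ≤ n * T.ncard := by
  classical
  have hs : S.ncard = hS.toFinset.card := Set.ncard_eq_toFinset_card S hS
  have ht : T.ncard = hT.toFinset.card := Set.ncard_eq_toFinset_card T hT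
  rw [hs, ht]
  apply Finset.card_le_mul_card_image_of_maps_to
  · intro a ha
    simp only [Set.Finite.mem_toFinset] at ha ⊢
    exact hmaps a ha
  · intro a ha
    have : ((hS.toFinset.filter (fun x => f x = a)) : Set β) = {x | x ∈ S ∧ f x = a} := by
      ext x; simp
    have hc : (hS.toFinset.filter (fun x => f x = a)).card
        = {x | x ∈ S ∧ f x = a}.ncard := by
      rw [← this, Set.ncard_coe_finset]
    rw [hc]
    simp only [Set.Finite.mem_toFinset] at ha
    exact hfib a (by simpa using ha)
section Contract

lemma contract_ground_eq (M : Matroid α) (C : Set α) :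
    (PaperDefs.contract M C).E = M.E \ C := rfl

lemma contract_eq_dual_restrict (M : Matroid α) (C : Set α) :
    PaperDefs.contract M C = (M✶ ↾ (M.E \ C))✶ := rfl

lemma contract_indep_iff (hC : C ⊆ M.E) (hI : M.IsBasis' I C) {J : Set α} :
    (PaperDefs.contract M C).Indep J ↔ J ⊆ M.E \ C ∧ M.Indep (J ∪ I) := by
  have hIC : I ⊆ C := hI.subset
  have hIE : I ⊆ M.E := hIC.trans hC
  have hclIC : M.closure I = M.closure C := hI.closure_eq_closure
  rw [contract_eq_dual_restrict]
  rw [dual_indep_iff_exists']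
  simp only [restrict_ground_eq]
  constructor
  · rintro ⟨hJE, B', hB', hdisj⟩
    rw [isBase_restrict_iff'] at hB'
    have hB'E : B' ⊆ M.E := hB'.subset.trans diff_subset
    set K : Set α := (M.E \ C) \ B' with hK
    have hJK : J ⊆ K := fun x hx => ⟨hJE hx, fun hxB => hdisj.ne_of_mem hx hxB rfl⟩
    refine ⟨hJE, ?_⟩
    have hKI : M.Indep (K ∪ I) := by
      by_contra hdep
      have hKIE : K ∪ I ⊆ M.E := union_subset (diff_subset.trans diff_subset) hIE
      obtain ⟨J₁, hJ₁, hIJ₁⟩ := hI.indep.subset_isBasis'_of_subset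
        (subset_union_right : I ⊆ K ∪ I)
      have hne : J₁ ≠ K ∪ I := by
        intro h
        rw [h] at hJ₁
        exact hdep hJ₁.indep
      obtain ⟨z, hzKI, hzJ₁⟩ := exists_of_ssubset (hJ₁.subset.ssubset_of_ne hne)
      have hzK : z ∈ K := by
        rcases hzKI with h | h
        · exact h
        · exact absurd (hIJ₁ h) hzJ₁
      have hzcl : z ∈ M.closure ((K ∪ I) \ {z}) := by
        have h1 : z ∈ M.closure J₁ := by
          rw [hJ₁.closure_eq_closure]
          exact M.subset_closure _ hKIE hzKI
        exact M.closure_subset_closure (subset_diff_singleton hJ₁.subset hzJ₁) h1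
      have hcl1 : M.closure ((K ∪ I) \ {z}) = M.closure (K ∪ I) :=
        closure_diff_singleton_eq_closure hzcl
      have hcl2 : M.closure (K ∪ I) = M.closure (K ∪ C) := by
        rw [← closure_union_closure_right_eq M K I, hclIC, closure_union_closure_right_eq]
      have hEB' : M.E \ B' = K ∪ C := by
        ext x
        constructor
        · rintro ⟨hxE, hxB⟩
          by_cases hxC : x ∈ C
          · exact Or.inr hxC
          · exact Or.inl ⟨⟨hxE, hxC⟩, hxB⟩
        · rintro (⟨⟨hxE, -⟩, hxB⟩ | hxC)
          · exact ⟨hxE, hxB⟩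
          · refine ⟨hC hxC, fun hxB => ?_⟩
            have h9 := hB'.subset hxB
            rw [mem_diff] at h9
            exact h9.2 hxC
      have hsp : M.Spanning (M.E \ B') :=
        (coindep_iff_compl_spanning hB'E).1 (coindep_def.2 hB'.indep)
      have hspKC : M.closure (K ∪ C) = M.E := by
        rw [← hEB']
        exact hsp.closure_eq
      have hzB : z ∉ B' := hzK.2
      have hins : M✶.Indep (insert z B') := by
        apply coindep_def.1
        apply (coindep_iff_compl_spanning (insert_subset (hKIE (Or.inl hzK)) hB'E)).2
        have hsub2 : (K ∪ I) \ {z} ⊆ M.E \ insert z B' := by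
          rintro x ⟨hx, hxz⟩
          refine ⟨hKIE hx, ?_⟩
          simp only [mem_insert_iff, not_or]
          refine ⟨by simpa using hxz, ?_⟩
          rcases hx with h | h
          · exact h.2
          · intro hxB
            have h9 := hB'.subset hxB
            rw [mem_diff] at h9
            exact h9.2 (hIC h)
        rw [spanning_iff_closure_eq diff_subset]
        apply subset_antisymm (M.closure_subset_ground _)
        calc M.E = M.closure ((K ∪ I) \ {z}) := by rw [hcl1, hcl2, hspKC]
          _ ⊆ M.closure (M.E \ insert z B') := M.closure_subset_closure hsub2
      exact hB'.insert_not_indep ⟨⟨hKIE (Or.inl hzK), hzK.1.2⟩, hzB⟩ hins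
    exact hKI.subset (union_subset_union_left I hJK)
  · rintro ⟨hJE, hJI⟩
    obtain ⟨B₀, hB₀, hsubB₀⟩ := hJI.exists_isBase_superset
    set B' : Set α := (M.E \ C) \ B₀ with hB'
    have hB'E : B' ⊆ M.E := diff_subset.trans diff_subset
    have hB'base : (M✶ ↾ (M.E \ C)).IsBase B' := by
      rw [isBase_restrict_iff']
      constructor
      · constructor
        · rw [dual_indep_iff_exists hB'E]
          exact ⟨B₀, hB₀, disjoint_sdiff_left⟩
        · exact diff_subset
      · intro K hK hB'K
        intro x hxK
        by_contra hxB'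
        have hxEC : x ∈ M.E \ C := hK.2 hxK
        have hxB₀ : x ∈ B₀ := by
          by_contra hxB₀
          exact hxB' ⟨hxEC, hxB₀⟩
        have hxI : x ∉ I := fun h => hxEC.2 (hIC h)
        have hIB₀x : I ⊆ B₀ \ {x} :=
          subset_diff_singleton (subset_union_right.trans hsubB₀) hxI
        have hsp : M.Spanning (M.E \ K) :=
          (coindep_iff_compl_spanning (hK.2.trans diff_subset)).1 (coindep_def.2 hK.1)
        have hsub3 : M.E \ K ⊆ M.closure (B₀ \ {x}) := by
          rintro y ⟨hyE, hyK⟩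
          have hyB' : y ∉ B' := fun h => hyK (hB'K h)
          have hyx : y ≠ x := fun h => hyK (h ▸ hxK)
          by_cases hyC : y ∈ C
          · exact M.closure_subset_closure hIB₀x (hclIC ▸ M.subset_closure C hC hyC)
          · have hyB₀ : y ∈ B₀ := by
              by_contra hyB₀
              exact hyB' ⟨⟨hyE, hyC⟩, hyB₀⟩
            exact M.subset_closure _ (diff_subset.trans hB₀.subset_ground) ⟨hyB₀, hyx⟩
        have hEcl : M.E ⊆ M.closure (B₀ \ {x}) := by
          calc M.E = M.closure (M.E \ K) := hsp.closure_eq.symm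
            _ ⊆ M.closure (M.closure (B₀ \ {x})) := M.closure_subset_closure hsub3
            _ = M.closure (B₀ \ {x}) := M.closure_closure _
        exact hB₀.indep.notMem_closure_diff_of_mem hxB₀ (hEcl (hB₀.subset_ground hxB₀))
    refine ⟨hJE, B', hB'base, ?_⟩
    exact Set.disjoint_left.2 fun x hxJ hxB' => hxB'.2 (hsubB₀ (Or.inl hxJ))

lemma contract_base_singleton (he : M.Indep {e}) {B₀ : Set α} (hB₀ : M.IsBase B₀) (heB : e ∈ B₀) :
    (PaperDefs.contract M {e}).IsBase (B₀ \ {e}) := by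
  have hb : M.IsBasis' {e} {e} := he.isBasis_self.isBasis'
  have hCE : ({e} : Set α) ⊆ M.E := he.subset_ground
  rw [isBase_iff_maximal_indep]
  constructor
  · rw [contract_indep_iff hCE hb]
    refine ⟨diff_subset_diff_left hB₀.subset_ground, ?_⟩
    have : B₀ \ {e} ∪ {e} = B₀ := by
      rw [diff_union_self, union_eq_left.2 (singleton_subset_iff.2 heB)]
    rw [this]
    exact hB₀.indep
  · intro K hK hBK
    rw [contract_indep_iff hCE hb] at hK
    obtain ⟨hKE, hKe⟩ := hK
    have hsub : B₀ ⊆ K ∪ {e} := by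
      intro x hx
      by_cases hxe : x = e
      · exact Or.inr (by simp [hxe])
      · exact Or.inl (hBK ⟨hx, by simpa using hxe⟩)
    have h2 : K ∪ {e} = B₀ := (hB₀.eq_of_subset_indep hKe hsub).symm
    intro x hxK
    have h3 := hKE hxK
    rw [mem_diff] at h3
    refine ⟨?_, h3.2⟩
    rw [← h2]
    exact Or.inl hxK

lemma contract_rk_singleton (hE : M.E.Finite) (he : M.Indep {e}) :
    rk (PaperDefs.contract M {e}) + 1 = rk M := by
  obtain ⟨B₀, hB₀, heB⟩ := he.exists_isBase_superset
  have heB₀ : e ∈ B₀ := heB rfl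
  have hfin : B₀.Finite := hE.subset hB₀.subset_ground
  rw [rk_eq_ncard_base (contract_base_singleton he hB₀ heB₀), rk_eq_ncard_base hB₀]
  rw [ncard_diff_singleton_of_mem heB₀]
  have : 1 ≤ B₀.ncard := by
    rw [Nat.one_le_iff_ne_zero]
    intro h
    rw [ncard_eq_zero hfin] at h
    subst h
    simp at heB₀
  omega

lemma contract_closure_indep (he : M.Indep {e}) {J : Set α}
    (hJN : (PaperDefs.contract M {e}).Indep J) :
    (PaperDefs.contract M {e}).closure J = M.closure (J ∪ {e}) \ {e} := by
  have hb : M.IsBasis' {e} {e} := he.isBasis_self.isBasis'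
  have hCE : ({e} : Set α) ⊆ M.E := he.subset_ground
  have hJ' := (contract_indep_iff hCE hb).1 hJN
  obtain ⟨hJE, hJe⟩ := hJ'
  ext x
  by_cases hxE : x ∈ M.E
  · by_cases hxe : x = e
    · constructor
      · intro hx
        have h1 := (PaperDefs.contract M {e}).closure_subset_ground J hx
        rw [contract_ground_eq, mem_diff] at h1
        exact absurd (show x ∈ ({e} : Set α) by simp [hxe]) h1.2
      · rintro ⟨-, h⟩
        exact absurd (show x ∈ ({e} : Set α) by simp [hxe]) h
    · rw [mem_diff]
      rw [hJN.mem_closure_iff', hJe.mem_closure_iff']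
      rw [contract_ground_eq]
      have hction : (PaperDefs.contract M {e}).Indep (insert x J) ↔
          insert x J ⊆ M.E \ {e} ∧ M.Indep (insert x (J ∪ {e})) := by
        rw [contract_indep_iff hCE hb]
        have : insert x J ∪ {e} = insert x (J ∪ {e}) := by
          ext y; simp; tauto
        rw [this]
      rw [hction]
      constructor
      · rintro ⟨-, h⟩
        refine ⟨⟨hxE, fun hind => ?_⟩, hxe⟩
        by_cases hxJ : x ∈ J
        · exact Or.inl hxJ
        · exact Or.inl (h ⟨insert_subset ⟨hxE, hxe⟩ hJE, hind⟩)
      · rintro ⟨⟨-, h⟩, -⟩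
        refine ⟨⟨hxE, hxe⟩, fun hh => ?_⟩
        rcases h hh.2 with h1 | h1
        · exact h1
        · exact absurd (by simpa using h1) hxe
  · constructor
    · intro hx
      have := (PaperDefs.contract M {e}).closure_subset_ground J hx
      rw [contract_ground_eq] at this
      exact absurd this.1 hxE
    · rintro ⟨hx, -⟩
      exact absurd (M.closure_subset_ground _ hx) hxE

end Contract

section Minor

lemma delete_eq_restrict' (M : Matroid α) (D : Set α) :
    PaperDefs.delete M D = M ↾ (M.E \ D) := rfl

lemma delete_delete' (M : Matroid α) (A B : Set α) :
    PaperDefs.delete (PaperDefs.delete M A) B = PaperDefs.delete M (A ∪ B) := by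
  rw [delete_eq_restrict', delete_eq_restrict', delete_eq_restrict', restrict_ground_eq,
    restrict_restrict_eq _ diff_subset, diff_diff]

lemma contract_contract' (M : Matroid α) (A B : Set α) :
    PaperDefs.contract (PaperDefs.contract M A) B = PaperDefs.contract M (A ∪ B) := by
  unfold PaperDefs.contract
  rw [dual_dual, delete_delete']

lemma restrict_eq_delete (hF : F ⊆ M.E) : M ↾ F = PaperDefs.delete M (M.E \ F) := by
  rw [delete_eq_restrict', diff_diff_cancel_left hF]

lemma contract_empty (M : Matroid α) : PaperDefs.contract M ∅ = M := by
  unfold PaperDefs.contract PaperDefs.delete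
  rw [diff_empty, restrict_ground_eq_self, dual_dual]

lemma isMinor_restrict_self (hS : X ⊆ M.E) : PaperDefs.IsMinor (M ↾ X) M := by
  refine ⟨∅, M.E \ X, empty_subset _, diff_subset, disjoint_sdiff_right.mono_left (empty_subset _), ?_⟩
  rw [contract_empty, delete_eq_restrict', diff_diff_cancel_left hS]

lemma contract_restrict_comm (hR : R ⊆ M.E) (hC : C ⊆ R) :
    PaperDefs.contract (M ↾ R) C = (PaperDefs.contract M C) ↾ (R \ C) := by
  obtain ⟨I, hI⟩ := M.exists_isBasis' C
  have hIres : (M ↾ R).IsBasis' I C := by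
    rw [← isBase_restrict_iff', restrict_restrict_eq _ hC, isBase_restrict_iff']
    exact hI
  have hIC : I ⊆ C := hI.subset
  apply ext_indep
  · rw [contract_ground_eq, restrict_ground_eq, restrict_ground_eq]
  · intro J hJ
    rw [contract_indep_iff (show C ⊆ (M ↾ R).E by simpa using hC) hIres,
      restrict_indep_iff, restrict_indep_iff,
      contract_indep_iff (hC.trans hR) hI]
    simp only [restrict_ground_eq]
    constructor
    · rintro ⟨hJRC, hMind, -⟩
      exact ⟨⟨fun x hx => ⟨hR (hJRC hx).1, (hJRC hx).2⟩, hMind⟩, hJRC⟩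
    · rintro ⟨⟨hJEC, hMind⟩, hJRC⟩
      refine ⟨hJRC, hMind, union_subset (fun x hx => (hJRC hx).1) (hIC.trans hC)⟩

lemma isMinor_trans_restrict {N' : Matroid α} (hF : F ⊆ M.E)
    (h : PaperDefs.IsMinor N' (M ↾ F)) : PaperDefs.IsMinor N' M := by
  obtain ⟨C, D, hC, hD, hdisj, rfl⟩ := h
  rw [restrict_ground_eq] at hC hD
  refine ⟨C, (M.E \ F) ∪ D, hC.trans hF, union_subset diff_subset (hD.trans hF), ?_, ?_⟩
  · rw [disjoint_union_right]
    refine ⟨?_, hdisj⟩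
    exact Set.disjoint_left.2 fun x hxC hxEF => hxEF.2 (hC hxC)
  · rw [contract_restrict_comm hF hC]
    rw [delete_eq_restrict', delete_eq_restrict', restrict_ground_eq,
      restrict_restrict_eq _ diff_subset, contract_ground_eq]
    congr 1
    ext x
    constructor
    · rintro ⟨⟨hxF, hxC⟩, hxD⟩
      refine ⟨⟨hF hxF, hxC⟩, ?_⟩
      rintro (⟨-, hxF'⟩ | hxD')
      · exact hxF' hxF
      · exact hxD hxD'
    · rintro ⟨⟨hxE, hxC⟩, hxU⟩
      have hxF : x ∈ F := by
        by_contra hxF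
        exact hxU (Or.inl ⟨hxE, hxF⟩)
      exact ⟨⟨hxF, hxC⟩, fun hxD => hxU (Or.inr hxD)⟩

lemma isMinor_trans_contract {N' : Matroid α} (hC0 : C ⊆ M.E)
    (h : PaperDefs.IsMinor N' (PaperDefs.contract M C)) : PaperDefs.IsMinor N' M := by
  obtain ⟨C', D, hC', hD, hdisj, rfl⟩ := h
  rw [contract_ground_eq] at hC' hD
  refine ⟨C ∪ C', D, union_subset hC0 (hC'.trans diff_subset), hD.trans diff_subset, ?_, ?_⟩
  · rw [disjoint_union_left]
    exact ⟨Set.disjoint_left.2 fun x hxC hxD => (hD hxD).2 hxC, hdisj⟩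
  · rw [contract_contract']

lemma noU_contract {ℓ : ℕ} (hC0 : C ⊆ M.E)
    (hminor : ¬ ∃ N : Matroid α, PaperDefs.IsMinor N M ∧ PaperDefs.IsUnif N 2 (ℓ + 2)) :
    ¬ ∃ N : Matroid α, PaperDefs.IsMinor N (PaperDefs.contract M C) ∧ PaperDefs.IsUnif N 2 (ℓ + 2) := by
  rintro ⟨N, hN1, hN2⟩
  exact hminor ⟨N, isMinor_trans_contract hC0 hN1, hN2⟩

lemma noU_restrict {ℓ : ℕ} (hF : F ⊆ M.E)
    (hminor : ¬ ∃ N : Matroid α, PaperDefs.IsMinor N M ∧ PaperDefs.IsUnif N 2 (ℓ + 2)) :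
    ¬ ∃ N : Matroid α, PaperDefs.IsMinor N (M ↾ F) ∧ PaperDefs.IsUnif N 2 (ℓ + 2) := by
  rintro ⟨N, hN1, hN2⟩
  exact hminor ⟨N, isMinor_trans_restrict hF hN1, hN2⟩

lemma line_bound {ℓ : ℕ} (hE : M.E.Finite)
    (hminor : ¬ ∃ N : Matroid α, PaperDefs.IsMinor N M ∧ PaperDefs.IsUnif N 2 (ℓ + 2))
    (hL : L ⊆ M.E) (hr2 : rkOf M L ≤ 2) : (ptsIn M L).ncard ≤ ℓ + 1 := by
  by_contra hgt
  push_neg at hgt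
  obtain ⟨T, hTsub, hTcard⟩ :=
    Set.exists_subset_card_eq (show ℓ + 2 ≤ (ptsIn M L).ncard by omega)
  classical
  have hTne : T.Nonempty := by
    apply Set.nonempty_of_ncard_ne_zero
    omega
  obtain ⟨P₀, hP₀⟩ := hTne
  obtain ⟨a₀, -, -, -⟩ := point_exists_nonloop hE (hTsub hP₀)
  have hch : ∀ P : Set α, ∃ a : α, P ∈ T → (a ∈ P ∧ M.Indep {a} ∧ P = M.closure {a}) := by
    intro P
    by_cases hP : P ∈ T
    · obtain ⟨a, h1, h2, h3⟩ := point_exists_nonloop hE (hTsub hP)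
      exact ⟨a, fun _ => ⟨h1, h2, h3⟩⟩
    · exact ⟨a₀, fun h => absurd h hP⟩
  choose g hg using hch
  have hinj : Set.InjOn g T := by
    intro P hP Q hQ hPQ
    rw [(hg P hP).2.2, (hg Q hQ).2.2, hPQ]
  set S : Set α := g '' T with hS
  have hSL : S ⊆ L := by
    rintro x ⟨P, hP, rfl⟩
    exact (hTsub hP).2.1 ((hg P hP).1)
  have hSE : S ⊆ M.E := hSL.trans hL
  have hSfin : S.Finite := hE.subset hSE
  have hScard : S.ncard = ℓ + 2 := by
    rw [hS, ncard_image_of_injOn hinj, hTcard]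
  apply hminor
  refine ⟨M ↾ S, isMinor_restrict_self hSE, ?_, ?_, ?_⟩
  · rw [restrict_ground_eq]; exact hSfin
  · rw [restrict_ground_eq]; exact hScard
  · intro I hIsub
    rw [restrict_ground_eq] at hIsub
    rw [restrict_indep_iff]
    constructor
    · rintro ⟨hi, hIS⟩
      refine ⟨hSfin.subset hIS, ?_⟩
      have := ncard_le_rkOf_of_indep hi (hIS.trans hSL) (hE.subset hL)
      omega
    · rintro ⟨hfin, hcard⟩
      refine ⟨?_, hIsub⟩
      have h012 : I.ncard = 0 ∨ I.ncard = 1 ∨ I.ncard = 2 := by omega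
      rcases h012 with h0 | h1 | h2
      · rw [ncard_eq_zero hfin] at h0
        subst h0
        exact M.empty_indep
      · obtain ⟨a, rfl⟩ := ncard_eq_one.1 h1
        obtain ⟨P, hP, rfl⟩ := hIsub rfl
        exact (hg P hP).2.1
      · obtain ⟨x, y, hxy, rfl⟩ := ncard_eq_two.1 h2
        obtain ⟨P, hP, hPx⟩ := hIsub (show x ∈ ({x, y} : Set α) by simp)
        obtain ⟨Q, hQ, hQy⟩ := hIsub (show y ∈ ({x, y} : Set α) by simp)
        have hPTpt := hTsub hP
        have hQTpt := hTsub hQ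
        have hxP : x ∈ P := hPx ▸ (hg P hP).1
        have hyQ : y ∈ Q := hQy ▸ (hg Q hQ).1
        have hxind : M.Indep {x} := hPx ▸ (hg P hP).2.1
        have hyind : M.Indep {y} := hQy ▸ (hg Q hQ).2.1
        have hynotP : y ∉ M.closure {x} := by
          intro hyP
          have hclP : M.closure {x} = P := by rw [← hPx, ← (hg P hP).2.2]
          rw [hclP] at hyP
          have hQP : Q = P := by
            have := point_eq_closure_of_mem hPTpt.1 hPTpt.2.2
              (hE.subset hPTpt.1.subset_ground) hyP hyind
            rw [this, (point_eq_closure_of_mem hQTpt.1 hQTpt.2.2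
              (hE.subset hQTpt.1.subset_ground) hyQ hyind).symm]
          rw [← hQP] at hPx
          exact hxy (hPx ▸ hQy ▸ (congrArg g hQP).symm ▸ rfl)
        have : M.Indep (insert y {x}) := by
          rw [hxind.insert_indep_iff_of_notMem (by simpa using (Ne.symm hxy))]
          exact ⟨hSE ⟨Q, hQ, hQy⟩, hynotP⟩
        have hpair : ({x, y} : Set α) = insert y {x} := by
          ext z; simp; tauto
        rw [hpair]
        exact this

end Minor

section Kung

lemma kung {ℓ : ℕ} (hl2 : 2 ≤ ℓ) : ∀ (n : ℕ) (M : Matroid α), M.E.Finite →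
    (¬ ∃ N : Matroid α, PaperDefs.IsMinor N M ∧ PaperDefs.IsUnif N 2 (ℓ + 2)) →
    rk M = n → (ℓ - 1) * (ptsIn M M.E).ncard + 1 ≤ ℓ ^ n := by
  intro n
  induction n with
  | zero =>
    intro M hE hminor hrk
    have hempty : ptsIn M M.E = ∅ := by
      rw [eq_empty_iff_forall_notMem]
      rintro P ⟨hPf, hPE, h1⟩
      have hle := rkOf_le_of_subset (M := M) hPE hE
      rw [← rk_eq_rkOf_ground, hrk, h1] at hle
      omega
    rw [hempty]
    simp
  | succ n ih =>
    intro M hE hminor hrk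
    obtain ⟨B₀, hB₀⟩ := M.exists_isBase
    have hB₀ne : B₀.Nonempty := by
      rcases B₀.eq_empty_or_nonempty with rfl | h
      · rw [rk_eq_ncard_base hB₀, ncard_empty] at hrk
        omega
      · exact h
    obtain ⟨e, heB₀⟩ := hB₀ne
    have he : M.Indep {e} := hB₀.indep.subset (by simpa using heB₀)
    have heE : e ∈ M.E := he.subset_ground rfl
    set N := PaperDefs.contract M {e} with hNdef
    have hNE : N.E = M.E \ {e} := contract_ground_eq M {e}
    have hNfin : N.E.Finite := by rw [hNE]; exact hE.diff
    have hNminor := noU_contract (ℓ := ℓ) he.subset_ground hminor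
    have hNrk : rk N = n := by
      have h9 := contract_rk_singleton hE he
      rw [← hNdef] at h9
      omega
    have hrec := ih N hNfin hNminor hNrk
    set Pe := M.closure {e} with hPedef
    set S := ptsIn M M.E \ {Pe} with hSdef
    have hSfin : S.Finite := (ptsIn_finite hE Subset.rfl).subset diff_subset
    set π : Set α → Set α := fun Q => M.closure (Q ∪ {e}) \ {e} with hπdef
    have hQfact : ∀ Q ∈ S, ∃ f, f ∈ Q ∧ M.Indep {f} ∧ Q = M.closure {f} ∧
        N.Indep {f} ∧ π Q = N.closure {f} := by
      rintro Q ⟨hQpt, hQne⟩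
      obtain ⟨f, hfQ, hf, hQf⟩ := point_exists_nonloop hE hQpt
      have hfE : f ∈ M.E := hQpt.1.subset_ground hfQ
      have hfPe : f ∉ Pe := by
        intro hfPe
        apply hQne
        rw [mem_singleton_iff, hQf, hPedef]
        exact (point_eq_closure_of_mem (rkOf_closure_singleton he).1
          (rkOf_closure_singleton he).2 (hE.subset (M.closure_subset_ground _)) hfPe hf).symm
      have hfe : f ≠ e := by
        intro h
        exact hfPe (h ▸ M.mem_closure_self e heE)
      have hfeind : M.Indep ({f} ∪ {e}) := by
        have h1 : M.Indep (insert f {e}) := by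
          rw [he.insert_indep_iff_of_notMem (by simpa using hfe)]
          exact ⟨hfE, hfPe⟩
        have hset : ({f} ∪ {e} : Set α) = insert f {e} := by
          ext z; simp; tauto
        rw [hset]
        exact h1
      have hfN : N.Indep {f} := by
        rw [hNdef, contract_indep_iff he.subset_ground he.isBasis_self.isBasis']
        refine ⟨?_, hfeind⟩
        rw [singleton_subset_iff, mem_diff]
        exact ⟨hfE, by simpa using hfe⟩
      have hclQe : M.closure (Q ∪ {e}) = M.closure ({f} ∪ {e}) := by
        apply subset_antisymm
        · apply closure_subset_closure_of_subset_closure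
          rintro x (hx | hx)
          · rw [hQf] at hx
            exact M.closure_subset_closure (by simp : ({f} : Set α) ⊆ {f} ∪ {e}) hx
          · exact M.subset_closure _ (union_subset (singleton_subset_iff.2 hfE)
              (singleton_subset_iff.2 heE)) (Or.inr hx)
        · exact M.closure_subset_closure
            (union_subset_union_left _ (singleton_subset_iff.2 hfQ))
      refine ⟨f, hfQ, hf, hQf, hfN, ?_⟩
      show M.closure (Q ∪ {e}) \ {e} = N.closure {f}
      rw [hclQe]
      exact (contract_closure_indep he hfN).symm
    have hmaps : ∀ Q ∈ S, π Q ∈ ptsIn N N.E := by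
      intro Q hQ
      obtain ⟨f, -, -, -, hfN, hπQ⟩ := hQfact Q hQ
      rw [hπQ]
      exact ⟨closure_flat' N {f}, N.closure_subset_ground _,
        (rkOf_closure_singleton (M := N) hfN).2⟩
    have hfib : ∀ P' ∈ ptsIn N N.E, {x | x ∈ S ∧ π x = P'}.ncard ≤ ℓ := by
      intro P' hP'
      obtain ⟨f', hf'P', hf'N, hP'f'⟩ := point_exists_nonloop hNfin hP'
      have hf'ind : M.Indep ({f'} ∪ {e}) := by
        have h1 := hf'N
        rw [hNdef, contract_indep_iff he.subset_ground he.isBasis_self.isBasis'] at h1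
        exact h1.2
      have hP'e : P' ∪ {e} = M.closure ({f'} ∪ {e}) := by
        rw [hP'f', hNdef, contract_closure_indep he hf'N, diff_union_self]
        rw [union_eq_left.2 (singleton_subset_iff.2 (M.subset_closure _
          hf'ind.subset_ground (Or.inr rfl)))]
      have hrk2 : rkOf M (P' ∪ {e}) ≤ 2 := by
        rw [hP'e, rkOf_closure_eq hf'ind.subset_ground]
        calc rkOf M ({f'} ∪ {e}) ≤ ({f'} ∪ {e} : Set α).ncard :=
              rkOf_le_ncard ((finite_singleton f').union (finite_singleton e))
          _ ≤ ({f'} : Set α).ncard + ({e} : Set α).ncard := ncard_union_le _ _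
          _ ≤ 2 := by simp
      have hPeUsub : P' ∪ {e} ⊆ M.E := hP'e ▸ M.closure_subset_ground _
      have hline := line_bound hE hminor hPeUsub hrk2
      have hPein : Pe ∈ ptsIn M (P' ∪ {e}) := by
        refine ⟨(rkOf_closure_singleton he).1, ?_, (rkOf_closure_singleton he).2⟩
        rw [hP'e, hPedef]
        exact M.closure_subset_closure (by simp)
      have hsubfib : {x | x ∈ S ∧ π x = P'} ⊆ ptsIn M (P' ∪ {e}) \ {Pe} := by
        rintro x ⟨⟨hxpt, hxne⟩, hπx⟩
        have hxE : x ⊆ M.E := hxpt.1.subset_ground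
        have h1 : M.closure (x ∪ {e}) \ {e} = P' := hπx
        have h2 : e ∈ M.closure (x ∪ {e}) := M.subset_closure _
          (union_subset hxE (by simpa using heE)) (Or.inr rfl)
        have hcle : M.closure (x ∪ {e}) = P' ∪ {e} := by
          rw [← h1]
          ext z
          constructor
          · intro hz
            by_cases hze : z = e
            · exact Or.inr (by simp [hze])
            · exact Or.inl ⟨hz, by simpa using hze⟩
          · rintro (⟨hz, -⟩ | hz)
            · exact hz
            · rw [mem_singleton_iff] at hz
              exact hz ▸ h2
        refine ⟨⟨hxpt.1, ?_, hxpt.2.2⟩, hxne⟩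
        rw [← hcle]
        exact (subset_union_left).trans
          (M.subset_closure _ (union_subset hxE (by simpa using heE)))
      calc {x | x ∈ S ∧ π x = P'}.ncard
          ≤ (ptsIn M (P' ∪ {e}) \ {Pe}).ncard :=
            ncard_le_ncard hsubfib ((ptsIn_finite hE hPeUsub).subset diff_subset)
        _ = (ptsIn M (P' ∪ {e})).ncard - 1 :=
            ncard_diff_singleton_of_mem hPein
        _ ≤ ℓ := by omega
    have hcount := ncard_le_mul_fiber hSfin (ptsIn_finite hNfin Subset.rfl) hmaps hfib
    have hcover : (ptsIn M M.E).ncard ≤ S.ncard + 1 := by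
      have hPept : Pe ∈ ptsIn M M.E :=
        ⟨(rkOf_closure_singleton he).1, M.closure_subset_ground _,
          (rkOf_closure_singleton he).2⟩
      have hsub : ptsIn M M.E ⊆ insert Pe S := by
        intro x hx
        by_cases hxPe : x = Pe
        · exact Or.inl hxPe
        · exact Or.inr ⟨hx, hxPe⟩
      calc (ptsIn M M.E).ncard ≤ (insert Pe S).ncard :=
            ncard_le_ncard hsub (hSfin.insert Pe)
        _ ≤ S.ncard + 1 := ncard_insert_le _ _
    have hl1 : 1 ≤ ℓ := by omega
    obtain ⟨m, rfl⟩ := Nat.exists_eq_add_of_le hl1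
    set a := (ptsIn N N.E).ncard
    have hrec' : m * a + 1 ≤ (1 + m) ^ n := by
      have hm : 1 + m - 1 = m := by omega
      rwa [hm] at hrec
    have hεM : (ptsIn M M.E).ncard ≤ (1 + m) * a + 1 := le_trans hcover (by omega)
    have hm : 1 + m - 1 = m := by omega
    rw [hm]
    calc m * (ptsIn M M.E).ncard + 1 ≤ m * ((1 + m) * a + 1) + 1 := by
          have := Nat.mul_le_mul_left m hεM
          omega
      _ = (1 + m) * (m * a + 1) := by ring
      _ ≤ (1 + m) * (1 + m) ^ n := Nat.mul_le_mul_left _ hrec'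
      _ = (1 + m) ^ (n + 1) := by ring

end Kung

section Bridge

lemma ptsIn_restrict_eq (hF : M.IsFlat F) : ptsIn (M ↾ F) F = ptsIn M F := by
  ext P
  simp only [ptsIn, mem_setOf_eq]
  constructor
  · rintro ⟨h1, h2, h3⟩
    rw [flat_restrict_iff hF] at h1
    rw [rkOf_restrict_eq h2] at h3
    exact ⟨h1.1, h2, h3⟩
  · rintro ⟨h1, h2, h3⟩
    refine ⟨(flat_restrict_iff hF).2 ⟨h1, h2⟩, h2, ?_⟩
    rw [rkOf_restrict_eq h2]
    exact h3

lemma eps_restrict_eq (hF : M.IsFlat F) : PaperDefs.eps (M ↾ F) = (ptsIn M F).ncard := by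
  unfold PaperDefs.eps
  congr 1
  ext P
  simp only [mem_setOf_eq, PaperDefs.Point]
  constructor
  · rintro ⟨h1, h3⟩
    have h2 : P ⊆ F := by
      have := h1.subset_ground
      simpa using this
    rw [flat_restrict_iff hF] at h1
    rw [rkOf_restrict_eq h2] at h3
    exact ⟨h1.1, h2, h3⟩
  · rintro ⟨h1, h2, h3⟩
    refine ⟨(flat_restrict_iff hF).2 ⟨h1, h2⟩, ?_⟩
    rw [rkOf_restrict_eq h2]
    exact h3

lemma eps_ground_eq (M : Matroid α) : PaperDefs.eps M = (ptsIn M M.E).ncard := by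
  conv_lhs => rw [← restrict_ground_eq_self M]
  exact eps_restrict_eq (ground_isFlat M)

end Bridge

section Cocircuit

lemma cocircuit_structure (hE : M.E.Finite) (hF : M.IsFlat F)
    (hC : PaperDefs.Cocircuit (M ↾ F) C) :
    C.Nonempty ∧ C ⊆ F ∧ M.IsFlat (F \ C) ∧ rkOf M (F \ C) + 1 = rkOf M F ∧
      M.IsFlat (M.closure C ∩ F) ∧ C ⊆ M.closure C ∩ F ∧
      rkOf M (M.closure C ∩ F) = rkOf M C := by
  obtain ⟨hCE, hCdep, hCmin⟩ := hC
  set N := M ↾ F with hNdef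
  have hFE : F ⊆ M.E := hF.subset_ground
  have hFfin : F.Finite := hE.subset hFE
  have hCF : C ⊆ F := by simpa [hNdef] using hCE
  have hCME : C ⊆ M.E := hCF.trans hFE
  have hCne : C.Nonempty := by
    rcases C.eq_empty_or_nonempty with rfl | h
    · exact absurd N✶.empty_indep hCdep
    · exact h
  set H := F \ C with hHdef
  have hHN : H ⊆ N.E := by
    rw [hNdef, restrict_ground_eq]
    exact diff_subset
  have hHns : ¬ N.Spanning H := by
    intro hsp
    apply hCdep
    apply coindep_def.1
    apply (coindep_iff_compl_spanning (show C ⊆ N.E by simpa [hNdef] using hCF)).2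
    have : N.E \ C = H := by
      rw [hNdef, restrict_ground_eq]
    rwa [this]
  have hsp : ∀ e ∈ C, N.Spanning (insert e H) := by
    intro e he
    have hss : C \ {e} ⊂ C := by
      apply ssubset_of_subset_of_ne diff_subset
      intro h
      have : e ∈ C \ {e} := h.symm ▸ he
      simp at this
    have hind := hCmin _ hss
    have := (coindep_iff_compl_spanning (show C \ {e} ⊆ N.E by
      rw [hNdef, restrict_ground_eq]; exact diff_subset.trans hCF)).1 (coindep_def.2 hind)
    have hseteq : N.E \ (C \ {e}) = insert e H := by
      rw [hNdef, restrict_ground_eq]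
      ext z
      constructor
      · rintro ⟨hzF, hz⟩
        by_cases hze : z = e
        · exact Or.inl hze
        · refine Or.inr ⟨hzF, fun hzC => hz ⟨hzC, hze⟩⟩
      · rintro (rfl | ⟨hzF, hzC⟩)
        · exact ⟨hCF he, fun h => h.2 rfl⟩
        · exact ⟨hzF, fun h => hzC h.1⟩
    rwa [hseteq] at this
  have hHflatN : N.IsFlat H := by
    apply flat_iff_closure_self.2
    refine ⟨?_, hHN⟩
    apply subset_antisymm _ (N.subset_closure H hHN)
    intro z hz
    by_contra hzH
    have hzF : z ∈ F := by
      have := N.closure_subset_ground H hz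
      rwa [hNdef, restrict_ground_eq] at this
    have hzC : z ∈ C := by
      by_contra hzC
      exact hzH ⟨hzF, hzC⟩
    have h1 := (hsp z hzC).closure_eq
    rw [closure_insert_eq_of_mem_closure hz] at h1
    exact hHns ((spanning_iff_closure_eq hHN).2 h1)
  have hHflat : M.IsFlat H := ((flat_restrict_iff hF).1 hHflatN).1
  -- rank of H
  obtain ⟨e₀, he₀⟩ := hCne
  have hHne : H ≠ F := by
    intro h
    have : e₀ ∈ H := h.symm ▸ hCF he₀
    exact this.2 he₀
  have hHrklt : rkOf M H < rkOf M F := by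
    rcases lt_or_ge (rkOf M H) (rkOf M F) with h | h
    · exact h
    · exact absurd (flat_eq_of_subset_of_rkOf_le hHflat hF diff_subset hFfin h) hHne
  have hHrkge : rkOf M F ≤ rkOf M H + 1 := by
    have h1 : N.closure (insert e₀ H) = F := by
      have := (hsp e₀ he₀).closure_eq
      rwa [hNdef, restrict_ground_eq] at this
    have h2 : rkOf M F = rkOf N (insert e₀ H) := by
      rw [← rkOf_restrict_eq (Subset.rfl : F ⊆ F), ← hNdef, ← h1,
        rkOf_closure_eq (show insert e₀ H ⊆ N.E by
          rw [hNdef, restrict_ground_eq]; exact insert_subset (hCF he₀) diff_subset)]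
    rw [h2, hNdef, rkOf_restrict_eq (insert_subset (hCF he₀) diff_subset)]
    exact rkOf_insert_le (hFfin.subset diff_subset)
  -- G
  set G := M.closure C ∩ F with hGdef
  have hGN : N.closure C = G := by
    rw [hNdef, closure_restrict_eq hFE hCF]
  have hGflat : M.IsFlat G := by
    have := closure_flat' N C
    rw [hGN] at this
    exact ((flat_restrict_iff hF).1 this).1
  have hCG : C ⊆ G := subset_inter (M.subset_closure C hCME) hCF
  have hGrk : rkOf M G = rkOf M C := by
    have h3 : G ⊆ F := inter_subset_right
    rw [← rkOf_restrict_eq h3, ← hNdef, ← hGN,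
      rkOf_closure_eq (show C ⊆ N.E by simpa [hNdef] using hCF), hNdef,
      rkOf_restrict_eq hCF]
  exact ⟨⟨e₀, he₀⟩, hCF, hHflat, by omega, hGflat, hCG, hGrk⟩

lemma pts_cover_cocircuit (hE : M.E.Finite) (hF : M.IsFlat F) (hCF : C ⊆ F)
    (hHflat : M.IsFlat (F \ C)) :
    ptsIn M F ⊆ ptsIn M (F \ C) ∪ ptsIn M (M.closure C ∩ F) := by
  intro P hP
  obtain ⟨hPflat, hPF, hP1⟩ := hP
  by_cases hPH : P ⊆ F \ C
  · exact Or.inl ⟨hPflat, hPH, hP1⟩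
  · obtain ⟨e, heP, heH⟩ := not_subset.1 hPH
    have heC : e ∈ C := by
      by_contra heC
      exact heH ⟨hPF heP, heC⟩
    have heE : e ∈ M.E := hPflat.subset_ground heP
    have henl : M.Indep {e} := by
      apply indep_singleton_of_not_mem_closure_empty heE
      intro hle
      apply heH
      have : M.closure ∅ ⊆ F \ C := by
        calc M.closure ∅ ⊆ M.closure (F \ C) := M.closure_subset_closure (empty_subset _)
          _ = F \ C := hHflat.closure
      exact this hle
    have hPe : P = M.closure {e} :=
      point_eq_closure_of_mem hPflat hP1 (hE.subset hPflat.subset_ground) heP henl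
    refine Or.inr ⟨hPflat, ?_, hP1⟩
    apply subset_inter _ hPF
    rw [hPe]
    exact M.closure_subset_closure (singleton_subset_iff.2 heC)

end Cocircuit

section RealArith

noncomputable def phi : ℝ := (1 + Real.sqrt 5) / 2

lemma sqrt5_sq : Real.sqrt 5 * Real.sqrt 5 = 5 :=
  Real.mul_self_sqrt (by norm_num)

lemma sqrt5_nonneg : 0 ≤ Real.sqrt 5 := Real.sqrt_nonneg 5

lemma one_le_sqrt5 : 1 ≤ Real.sqrt 5 := by nlinarith [sqrt5_sq, sqrt5_nonneg]

lemma sqrt5_le_three : Real.sqrt 5 ≤ 3 := by nlinarith [sqrt5_sq, sqrt5_nonneg]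

lemma phi_mul : phi * phi = phi + 1 := by
  unfold phi
  nlinarith [sqrt5_sq]

lemma one_le_phi : 1 ≤ phi := by
  unfold phi
  nlinarith [one_le_sqrt5]

lemma phi_pos : 0 < phi := lt_of_lt_of_le one_pos one_le_phi

lemma phi_le_two : phi ≤ 2 := by
  unfold phi
  nlinarith [sqrt5_le_three]

lemma lam_mul_phi : (Real.sqrt 5 - 1) * phi = 2 := by
  unfold phi
  nlinarith [sqrt5_sq]

lemma phi_pow_add2 (k : ℕ) : phi ^ (k + 2) = phi ^ (k + 1) + phi ^ k := by
  calc phi ^ (k + 2) = phi ^ k * (phi * phi) := by ring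
    _ = phi ^ k * (phi + 1) := by rw [phi_mul]
    _ = phi ^ (k + 1) + phi ^ k := by ring

lemma phi_pow_nonneg (k : ℕ) : 0 ≤ phi ^ k := pow_nonneg phi_pos.le k

lemma one_le_phi_pow (k : ℕ) : 1 ≤ phi ^ k := by
  have := pow_le_pow_left₀ (by norm_num : (0:ℝ) ≤ 1) one_le_phi k
  simpa using this

noncomputable def Qr (q k : ℕ) : ℝ := ((q : ℝ) ^ k - 1) / ((q : ℝ) - 1)

variable {q ℓ k : ℕ}

lemma qR_two (hq : 2 ≤ q) : (2 : ℝ) ≤ (q : ℝ) := by exact_mod_cast hq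

lemma qR_sub_pos (hq : 2 ≤ q) : 0 < (q : ℝ) - 1 := by
  have := qR_two hq
  linarith

lemma one_le_q_pow (hq : 2 ≤ q) (k : ℕ) : 1 ≤ (q : ℝ) ^ k := by
  have := pow_le_pow_left₀ (by norm_num : (0:ℝ) ≤ 1) (by linarith [qR_two hq] : (1:ℝ) ≤ q) k
  simpa using this

lemma Qr_nonneg (hq : 2 ≤ q) (k : ℕ) : 0 ≤ Qr q k :=
  div_nonneg (by linarith [one_le_q_pow hq k]) (qR_sub_pos hq).le

lemma Qr_succ (hq : 2 ≤ q) (k : ℕ) : Qr q (k + 1) = q * Qr q k + 1 := by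
  unfold Qr
  have h := (qR_sub_pos hq).ne.symm
  field_simp
  ring

lemma Qr_mono (hq : 2 ≤ q) {k k' : ℕ} (h : k ≤ k') : Qr q k ≤ Qr q k' := by
  unfold Qr
  apply (div_le_div_iff_of_pos_right (qR_sub_pos hq)).2
  have : (q:ℝ) ^ k ≤ (q:ℝ) ^ k' :=
    pow_le_pow_right₀ (by linarith [qR_two hq] : (1:ℝ) ≤ q) h
  linarith

lemma two_Qr_le (hq : 2 ≤ q) (k : ℕ) : 2 * Qr q k ≤ Qr q (k + 1) := by
  rw [Qr_succ hq]
  have h1 := Qr_nonneg hq k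
  have h2 := qR_two hq
  nlinarith

lemma pow_le_Qr (hq : 2 ≤ q) (k : ℕ) : (q : ℝ) ^ k ≤ Qr q (k + 1) := by
  unfold Qr
  rw [le_div_iff₀ (qR_sub_pos hq)]
  have h1 := one_le_q_pow hq k
  have : (q:ℝ) ^ (k+1) = (q:ℝ)^k * q := by ring
  nlinarith

lemma Qr_lt_iff (hq : 2 ≤ q) {k ε : ℕ} :
    (q ^ k - 1) / (q - 1) < ε ↔ Qr q k < (ε : ℝ) := by
  have hq1 : 1 ≤ q := by omega
  have hqk : 1 ≤ q ^ k := Nat.one_le_pow _ _ (by omega)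
  rw [Nat.div_lt_iff_lt_mul (by omega : 0 < q - 1)]
  unfold Qr
  rw [div_lt_iff₀ (qR_sub_pos hq)]
  constructor
  · intro h
    have : ((q ^ k - 1 : ℕ) : ℝ) < ((ε * (q - 1) : ℕ) : ℝ) := by exact_mod_cast h
    push_cast [Nat.cast_sub hqk, Nat.cast_sub hq1] at this
    convert this using 1 <;> push_cast [Nat.cast_sub hqk, Nat.cast_sub hq1] <;> ring
  · intro h
    have : ((q ^ k - 1 : ℕ) : ℝ) < ((ε * (q - 1) : ℕ) : ℝ) := by
      push_cast [Nat.cast_sub hqk, Nat.cast_sub hq1]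
      convert h using 1 <;> ring
    exact_mod_cast this

lemma Qr_phi_le (hq : 2 ≤ q) : ∀ (j s : ℕ), Qr q s * phi ^ j ≤ Qr q (s + j) := by
  intro j
  induction j with
  | zero => intro s; simp
  | succ j ih =>
    intro s
    have h1 : Qr q s * phi ^ (j + 1) = (Qr q s * phi ^ j) * phi := by ring
    rw [h1]
    calc (Qr q s * phi ^ j) * phi ≤ Qr q (s + j) * phi := by
          apply mul_le_mul_of_nonneg_right (ih s) phi_pos.le
      _ ≤ Qr q (s + j) * 2 := by
          apply mul_le_mul_of_nonneg_left phi_le_two (Qr_nonneg hq _)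
      _ ≤ Qr q (s + j + 1) := by
          have := two_Qr_le hq (s + j)
          linarith

end RealArith

section DrArith

variable {q ℓ t : ℕ}

noncomputable def Dr (ℓ t k : ℕ) : ℝ := Qr ℓ (t - 1) * phi ^ k / phi ^ (t - 1)

lemma Dr_nonneg (hℓ : 2 ≤ ℓ) (t k : ℕ) : 0 ≤ Dr ℓ t k :=
  div_nonneg (mul_nonneg (Qr_nonneg hℓ _) (phi_pow_nonneg k)) (phi_pow_nonneg _)

lemma Dr_succ (ℓ t k : ℕ) : Dr ℓ t (k + 1) = phi * Dr ℓ t k := by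
  unfold Dr
  rw [pow_succ]
  ring

lemma Dr_add2 (ℓ t k : ℕ) : Dr ℓ t (k + 2) = Dr ℓ t (k + 1) + Dr ℓ t k := by
  unfold Dr
  rw [phi_pow_add2]
  ring

lemma Dr_mono (hℓ : 2 ≤ ℓ) {k k' : ℕ} (h : k ≤ k') : Dr ℓ t k ≤ Dr ℓ t k' := by
  unfold Dr
  apply (div_le_div_iff_of_pos_right (pow_pos phi_pos _)).2
  exact mul_le_mul_of_nonneg_left (pow_le_pow_right₀ one_le_phi h) (Qr_nonneg hℓ _)

lemma Qr_le_Dr (hℓ : 2 ≤ ℓ) {s : ℕ} (hs : s ≤ t - 1) : Qr ℓ s ≤ Dr ℓ t s := by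
  unfold Dr
  rw [le_div_iff₀ (pow_pos phi_pos _)]
  have h1 := Qr_phi_le hℓ (t - 1 - s) s
  rw [show s + (t - 1 - s) = t - 1 by omega] at h1
  have h2 : Qr ℓ s * phi ^ (t - 1) = (Qr ℓ s * phi ^ (t - 1 - s)) * phi ^ s := by
    rw [mul_assoc, ← pow_add]
    congr 2
    omega
  rw [h2]
  exact mul_le_mul_of_nonneg_right h1 (phi_pow_nonneg s)

lemma kung_flat {M : Matroid α} (hℓ : 2 ≤ ℓ) (hfin : M.E.Finite)
    (hminor : ¬ ∃ N : Matroid α, PaperDefs.IsMinor N M ∧ PaperDefs.IsUnif N 2 (ℓ + 2))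
    {F : Set α} (hF : M.IsFlat F) :
    ((ptsIn M F).ncard : ℝ) ≤ Qr ℓ (rkOf M F) := by
  have hFE := hF.subset_ground
  have hEfin : (M ↾ F).E.Finite := by rw [restrict_ground_eq]; exact hfin.subset hFE
  have h := kung hℓ (rk (M ↾ F)) (M ↾ F) hEfin (noU_restrict hFE hminor) rfl
  rw [restrict_ground_eq, ptsIn_restrict_eq hF, rk_restrict_eq_rkOf] at h
  set c := (ptsIn M F).ncard
  set k := rkOf M F
  unfold Qr
  rw [le_div_iff₀ (qR_sub_pos hℓ)]
  have h1 : (ℓ - 1) * c ≤ ℓ ^ k - 1 := by omega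
  have h3 : (((ℓ - 1) * c : ℕ) : ℝ) ≤ (((ℓ ^ k - 1 : ℕ)) : ℝ) := by exact_mod_cast h1
  push_cast [Nat.cast_sub (show 1 ≤ ℓ by omega),
    Nat.cast_sub (Nat.one_le_pow _ _ (show 0 < ℓ by omega))] at h3
  linarith

end DrArith

end KungAux

open KungAux

theorem stmt5 {α : Type*} (t ℓ q : ℕ) (ht : 2 ≤ t) (hℓ : 2 ≤ ℓ) (hq : IsPrimePow q)
    (M : Matroid α) (hfin : M.E.Finite)
    (hminor : ¬ ∃ N : Matroid α, PaperDefs.IsMinor N M ∧ IsUnif N 2 (ℓ + 2))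
    (hdense : (q ^ rk M - 1) / (q - 1) < eps M)
    (hr : ((ℓ : ℝ)) ^ (t - 1) ≤ (Real.sqrt 5 - 1) ^ (rk M - 1)) :
    ∃ X ⊆ M.E,
      (q ^ rk (M ↾ X) - 1) / (q - 1) < eps (M ↾ X) ∧
      t ≤ rk (M ↾ X) ∧
      ∀ C, Cocircuit (M ↾ X) C → rk (M ↾ X) - 1 ≤ rkOf (M ↾ X) C := by
  classical
  have hq2 : 2 ≤ q := hq.two_le
  -- members of the family have rank at least t
  have hrank_t : ∀ F : Set α, M.IsFlat F →
      Dr ℓ t (rkOf M F) < ((ptsIn M F).ncard : ℝ) → t ≤ rkOf M F := by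
    intro F hFflat hFD
    by_contra hlt
    push_neg at hlt
    have hs : rkOf M F ≤ t - 1 := by omega
    have h1 := kung_flat hℓ hfin hminor hFflat
    have h2 := Qr_le_Dr (t := t) hℓ hs
    linarith
  -- rk M ≥ 1
  have hr₀1 : 1 ≤ rk M := by
    by_contra h
    push_neg at h
    have h0 : rk M = 0 := by omega
    rw [h0] at hr
    norm_num at hr
    have hl2 : (2 : ℝ) ≤ (ℓ : ℝ) := by exact_mod_cast hℓ
    have : (2 : ℝ) ≤ (ℓ : ℝ) ^ (t - 1) := by
      calc (2 : ℝ) ≤ (ℓ : ℝ) := hl2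
        _ = (ℓ : ℝ) ^ 1 := (pow_one _).symm
        _ ≤ (ℓ : ℝ) ^ (t - 1) := pow_le_pow_right₀ (by linarith) (by omega)
    linarith
  have hQdense : Qr q (rk M) < ((ptsIn M M.E).ncard : ℝ) := by
    rw [← eps_ground_eq]
    exact (Qr_lt_iff hq2).1 hdense
  have hDQ : Dr ℓ t (rk M) ≤ Qr q (rk M) := by
    obtain ⟨r₁, hr₁⟩ : ∃ r₁, rk M = r₁ + 1 := ⟨rk M - 1, by omega⟩
    unfold Dr
    rw [div_le_iff₀ (pow_pos phi_pos _)]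
    have hLt_le : Qr ℓ (t - 1) ≤ (ℓ : ℝ) ^ (t - 1) := by
      unfold Qr
      have h1 := one_le_q_pow hℓ (t - 1)
      have h2 := qR_two hℓ
      rw [div_le_iff₀ (qR_sub_pos hℓ)]
      nlinarith
    have step1 : Qr ℓ (t - 1) * phi ^ rk M ≤ (ℓ : ℝ) ^ (t - 1) * phi ^ rk M :=
      mul_le_mul_of_nonneg_right hLt_le (phi_pow_nonneg _)
    have hr' : (ℓ : ℝ) ^ (t - 1) ≤ (Real.sqrt 5 - 1) ^ r₁ := by
      rw [hr₁] at hr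
      simpa using hr
    have step2 : (ℓ : ℝ) ^ (t - 1) * phi ^ rk M ≤ (Real.sqrt 5 - 1) ^ r₁ * phi ^ rk M :=
      mul_le_mul_of_nonneg_right hr' (phi_pow_nonneg _)
    have step3 : (Real.sqrt 5 - 1) ^ r₁ * phi ^ rk M = 2 ^ r₁ * phi := by
      rw [hr₁, pow_succ]
      calc (Real.sqrt 5 - 1) ^ r₁ * (phi ^ r₁ * phi)
          = ((Real.sqrt 5 - 1) * phi) ^ r₁ * phi := by rw [mul_pow]; ring
        _ = 2 ^ r₁ * phi := by rw [lam_mul_phi]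
    have step4 : (2 : ℝ) ^ r₁ * phi ≤ (q : ℝ) ^ r₁ * phi :=
      mul_le_mul_of_nonneg_right (pow_le_pow_left₀ (by norm_num) (qR_two hq2) r₁) phi_pos.le
    have step5 : (q : ℝ) ^ r₁ * phi ≤ Qr q (rk M) * phi := by
      apply mul_le_mul_of_nonneg_right _ phi_pos.le
      rw [hr₁]
      exact pow_le_Qr hq2 r₁
    have step6 : Qr q (rk M) * phi ≤ Qr q (rk M) * phi ^ (t - 1) := by
      apply mul_le_mul_of_nonneg_left _ (Qr_nonneg hq2 _)
      calc phi = phi ^ 1 := (pow_one _).symm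
        _ ≤ phi ^ (t - 1) := pow_le_pow_right₀ one_le_phi (by omega)
    linarith
  -- the family
  set Fam : Set (Set α) := {F | M.IsFlat F ∧ Qr q (rkOf M F) < ((ptsIn M F).ncard : ℝ) ∧
      Dr ℓ t (rkOf M F) < ((ptsIn M F).ncard : ℝ)} with hFam
  have hEFam : M.E ∈ Fam := by
    refine ⟨ground_isFlat M, ?_, ?_⟩
    · rw [← rk_eq_rkOf_ground]
      exact hQdense
    · rw [← rk_eq_rkOf_ground]
      linarith
  set ns : Set ℕ := Set.ncard '' Fam with hns
  have hnsne : ns.Nonempty := ⟨M.E.ncard, M.E, hEFam, rfl⟩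
  obtain ⟨F, hFFam, hFcard⟩ := Nat.sInf_mem hnsne
  have hmin : ∀ F' ∈ Fam, sInf ns ≤ F'.ncard := fun F' h => Nat.sInf_le ⟨F', h, rfl⟩
  obtain ⟨hFflat, hFQ, hFD⟩ := hFFam
  have hFE := hFflat.subset_ground
  have hFfin : F.Finite := hfin.subset hFE
  have hrt : t ≤ rkOf M F := hrank_t F hFflat hFD
  refine ⟨F, hFE, ?_, ?_, ?_⟩
  · rw [rk_restrict_eq_rkOf, eps_restrict_eq hFflat]
    exact (Qr_lt_iff hq2).2 hFQ
  · rw [rk_restrict_eq_rkOf]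
    exact hrt
  · intro C hC
    by_contra hbad
    push_neg at hbad
    obtain ⟨hCne, hCF, hHflat, hHrk, hGflat, hCG, hGrk⟩ := cocircuit_structure hfin hFflat hC
    obtain ⟨m, hm⟩ : ∃ m, rkOf M F = m + 2 := ⟨rkOf M F - 2, by omega⟩
    rw [rk_restrict_eq_rkOf, rkOf_restrict_eq hCF] at hbad
    have hs : rkOf M C ≤ m := by omega
    have hHrk' : rkOf M (F \ C) = m + 1 := by omega
    obtain ⟨e₀, he₀⟩ := hCne
    have hHss : F \ C ⊂ F := ⟨diff_subset, fun h => (h (hCF he₀)).2 he₀⟩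
    have hGss : M.closure C ∩ F ⊂ F := by
      refine ⟨inter_subset_right, fun h => ?_⟩
      have h2 : rkOf M F ≤ rkOf M (M.closure C ∩ F) := rkOf_le_of_subset h
        (hfin.subset (inter_subset_right.trans hFE))
      rw [hGrk] at h2
      omega
    have hHnot : (F \ C) ∉ Fam := by
      intro h
      have h1 := hmin _ h
      have h2 : (F \ C).ncard < F.ncard := ncard_lt_ncard hHss hFfin
      omega
    have hGnot : (M.closure C ∩ F) ∉ Fam := by
      intro h
      have h1 := hmin _ h
      have h2 : (M.closure C ∩ F).ncard < F.ncard := ncard_lt_ncard hGss hFfin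
      omega
    set a : ℝ := ((ptsIn M (F \ C)).ncard : ℝ) with hadef
    set b : ℝ := ((ptsIn M (M.closure C ∩ F)).ncard : ℝ) with hbdef
    have ha : a ≤ Qr q (m + 1) ∨ a ≤ Dr ℓ t (m + 1) := by
      by_contra hcon
      push_neg at hcon
      exact hHnot ⟨hHflat, by rw [hHrk']; exact hcon.1, by rw [hHrk']; exact hcon.2⟩
    have hb : b ≤ Qr q m ∨ b ≤ Dr ℓ t m := by
      by_contra hcon
      push_neg at hcon
      apply hGnot
      refine ⟨hGflat, ?_, ?_⟩
      · rw [hGrk]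
        exact lt_of_le_of_lt (Qr_mono hq2 hs) hcon.1
      · rw [hGrk]
        exact lt_of_le_of_lt (Dr_mono hℓ hs) hcon.2
    have hcov : ((ptsIn M F).ncard : ℝ) ≤ a + b := by
      have h1 := ncard_le_ncard (pts_cover_cocircuit hfin hFflat hCF hHflat)
        ((ptsIn_finite hfin (diff_subset.trans hFE)).union
          (ptsIn_finite hfin (inter_subset_right.trans hFE)))
      have h2 := ncard_union_le (ptsIn M (F \ C)) (ptsIn M (M.closure C ∩ F))
      have h3 : (ptsIn M F).ncard ≤
          (ptsIn M (F \ C)).ncard + (ptsIn M (M.closure C ∩ F)).ncard := le_trans h1 h2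
      rw [hadef, hbdef]
      exact_mod_cast h3
    have hεQ : Qr q (m + 2) < ((ptsIn M F).ncard : ℝ) := by rw [← hm]; exact hFQ
    have hεD : Dr ℓ t (m + 2) < ((ptsIn M F).ncard : ℝ) := by rw [← hm]; exact hFD
    have hQQ : Qr q (m + 1) + Qr q m ≤ Qr q (m + 2) := by
      have h1 := two_Qr_le hq2 (m + 1)
      have h2 := Qr_mono hq2 (Nat.le_succ m)
      linarith
    have hDD : Dr ℓ t (m + 1) + Dr ℓ t m = Dr ℓ t (m + 2) := (Dr_add2 ℓ t m).symm
    have h2Q : 2 * Qr q (m + 1) ≤ Qr q (m + 2) := two_Qr_le hq2 (m + 1)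
    have h2Qm : 2 * Qr q m ≤ Qr q (m + 1) := two_Qr_le hq2 m
    have hDsucc : Dr ℓ t (m + 1) = phi * Dr ℓ t m := Dr_succ ℓ t m
    have hDm_nonneg := Dr_nonneg hℓ t m
    have hQm_nonneg := Qr_nonneg hq2 m
    have hDmono : Dr ℓ t m ≤ Dr ℓ t (m + 1) := Dr_mono hℓ (Nat.le_succ m)
    have hphile : phi ≤ 2 := phi_le_two
    rcases ha with ha | ha <;> rcases hb with hb | hb
    · linarith
    · rcases le_total (Qr q (m + 1)) (Dr ℓ t (m + 1)) with h | h
      · linarith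
      · linarith
    · rcases le_total (Dr ℓ t (m + 1)) (Qr q (m + 1)) with h | h
      · linarith
      · have hQD : Qr q m ≤ Dr ℓ t m := by nlinarith
        linarith
    · linarith
end
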